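/- arXiv:2511.01412 — 8 statements merged into one kernel-verified Lean document; each statement's English description precedes it below -/
import Mathlib

section
/- Cross-moment representation of the observed and causal effects (step in the proof of Proposition 1): E[g_c·α_c] = θ_c, E[g_P·α_P] = θ_P, and the cross moments satisfy E[g_P·α_c] = E[g_c·α_P] = θ_P. Consequently, θ_c − θ_P = E[(g_c − g_P)(α_c − α_P)]. -/
open MeasureTheory ProbabilityTheory

private lemma int_mul_condexp {Ω : Type*} {m0 : MeasurableSpace Ω} (P : Measure Ω)
    [IsProbabilityMeasure P] {m : MeasurableSpace Ω} (hm : m ≤ m0) {f B : Ω → ℝ}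
    (hf : StronglyMeasurable[m] f) (hint : Integrable (fun ω => f ω * B ω) P)
    (hB : Integrable B P) :
    ∫ ω, f ω * B ω ∂P = ∫ ω, f ω * (P[B|m]) ω ∂P := by
  have h1 : P[f * B|m] =ᵐ[P] f * P[B|m] := condExp_mul_of_stronglyMeasurable_left hf hint hB
  calc ∫ ω, f ω * B ω ∂P = ∫ ω, (P[f * B|m]) ω ∂P := (integral_condExp hm).symm
    _ = ∫ ω, (f * P[B|m]) ω ∂P := integral_congr_ae h1
    _ = ∫ ω, f ω * (P[B|m]) ω ∂P := rfl

private lemma rep_lemma {Ω : Type*} {m0 : MeasurableSpace Ω} (P : Measure Ω)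
    [IsProbabilityMeasure P] {m : MeasurableSpace Ω} (hm : m ≤ m0)
    {A : Ω → ℝ} (hA : Measurable[m0] A) (hA01 : ∀ ω, A ω = 0 ∨ A ω = 1)
    {κ : ℝ} (hκ0 : 0 < κ)
    {π : Ω → ℝ} (hπm : Measurable[m] π) (hπv : π =ᵐ[P] P[A | m])
    (hlb : ∀ ω, κ ≤ π ω) (hub : ∀ ω, π ω ≤ 1 - κ)
    {g0 g1 : Ω → ℝ} (hg0m : Measurable[m] g0) (hg1m : Measurable[m] g1)
    (hg0i : Integrable g0 P) (hg1i : Integrable g1 P) :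
    ∫ ω, (A ω * g1 ω + (1 - A ω) * g0 ω) * (A ω / π ω - (1 - A ω) / (1 - π ω)) ∂P
      = (∫ ω, g1 ω ∂P) - ∫ ω, g0 ω ∂P := by
  have hπpos : ∀ ω, 0 < π ω := fun ω => lt_of_lt_of_le hκ0 (hlb ω)
  have hπ1pos : ∀ ω, 0 < 1 - π ω := fun ω => by have := hub ω; linarith
  have hAbd : ∀ ω, ‖A ω‖ ≤ 1 := by
    intro ω; rcases hA01 ω with h | h <;> simp [h]
  have hAint : Integrable A P :=
    (integrable_const (μ := P) (1 : ℝ)).mono'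
      (hA.aestronglyMeasurable (μ := P)) (Filter.Eventually.of_forall hAbd)
  have h1Aint : Integrable (fun ω => 1 - A ω) P := (integrable_const 1).sub hAint
  have h1Abd : ∀ ω, ‖1 - A ω‖ ≤ 1 := by
    intro ω; rcases hA01 ω with h | h <;> simp [h]
  -- integrability of g1/π and g0/(1-π)
  have hinvbd : ∀ ω, ‖(π ω)⁻¹‖ ≤ κ⁻¹ := by
    intro ω
    rw [Real.norm_eq_abs, abs_of_pos (inv_pos.2 (hπpos ω))]
    exact inv_anti₀ hκ0 (hlb ω)
  have hinv1bd : ∀ ω, ‖(1 - π ω)⁻¹‖ ≤ κ⁻¹ := by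
    intro ω
    rw [Real.norm_eq_abs, abs_of_pos (inv_pos.2 (hπ1pos ω))]
    exact inv_anti₀ hκ0 (by have := hub ω; linarith)
  have hπm0 : Measurable[m0] π := hπm.mono hm le_rfl
  have hh1int : Integrable (fun ω => g1 ω / π ω) P := by
    have := hg1i.bdd_mul hπm0.inv.aestronglyMeasurable (Filter.Eventually.of_forall hinvbd)
    exact this.congr (Filter.Eventually.of_forall fun ω => by
      simp [div_eq_mul_inv, mul_comm])
  have hh0int : Integrable (fun ω => g0 ω / (1 - π ω)) P := by
    have := hg0i.bdd_mul (measurable_const.sub hπm0).inv.aestronglyMeasurable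
      (Filter.Eventually.of_forall hinv1bd)
    exact this.congr (Filter.Eventually.of_forall fun ω => by
      simp [div_eq_mul_inv, mul_comm])
  have hi1 : Integrable (fun ω => g1 ω / π ω * A ω) P := by
    have := hh1int.bdd_mul hA.aestronglyMeasurable (Filter.Eventually.of_forall hAbd)
    exact this.congr (Filter.Eventually.of_forall fun ω => mul_comm _ _)
  have hi0 : Integrable (fun ω => g0 ω / (1 - π ω) * (1 - A ω)) P := by
    have := hh0int.bdd_mul (measurable_const.sub hA).aestronglyMeasurable (Filter.Eventually.of_forall h1Abd)
    exact this.congr (Filter.Eventually.of_forall fun ω => mul_comm _ _)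
  -- pointwise identity
  have hpt : ∀ ω, (A ω * g1 ω + (1 - A ω) * g0 ω) * (A ω / π ω - (1 - A ω) / (1 - π ω))
      = g1 ω / π ω * A ω - g0 ω / (1 - π ω) * (1 - A ω) := by
    intro ω; rcases hA01 ω with h | h <;> rw [h] <;> ring
  -- conditional expectation of 1 - A
  have h1Av : P[(fun ω => 1 - A ω) | m] =ᵐ[P] fun ω => 1 - π ω := by
    have h1 : P[(fun ω => 1 - A ω) | m]
        =ᵐ[P] P[(fun _ => (1 : ℝ)) | m] - P[A | m] := by
      have := condExp_sub (μ := P) (m := m) (integrable_const (1 : ℝ)) hAint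
      exact this
    have h2 : P[(fun _ => (1 : ℝ)) | m] = fun _ => (1 : ℝ) := condExp_const hm 1
    filter_upwards [h1, hπv] with ω hω hπω
    simp only [hω, h2, Pi.sub_apply, hπω]
  have key1 : ∫ ω, g1 ω / π ω * A ω ∂P = ∫ ω, g1 ω ∂P := by
    rw [int_mul_condexp P hm (f := fun ω => g1 ω / π ω) ((hg1m.div hπm).stronglyMeasurable) hi1 hAint]
    rw [integral_congr_ae (g := fun ω => g1 ω)]
    filter_upwards [hπv] with ω hω
    rw [← hω, div_mul_cancel₀ _ (ne_of_gt (hπpos ω))]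
  have key0 : ∫ ω, g0 ω / (1 - π ω) * (1 - A ω) ∂P = ∫ ω, g0 ω ∂P := by
    rw [int_mul_condexp P hm (f := fun ω => g0 ω / (1 - π ω)) ((hg0m.div (measurable_const.sub hπm)).stronglyMeasurable)
      hi0 h1Aint]
    rw [integral_congr_ae (g := fun ω => g0 ω)]
    filter_upwards [h1Av] with ω hω
    rw [hω, div_mul_cancel₀ _ (ne_of_gt (hπ1pos ω))]
  calc ∫ ω, (A ω * g1 ω + (1 - A ω) * g0 ω) * (A ω / π ω - (1 - A ω) / (1 - π ω)) ∂P
      = ∫ ω, (g1 ω / π ω * A ω - g0 ω / (1 - π ω) * (1 - A ω)) ∂P :=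
        integral_congr_ae (Filter.Eventually.of_forall hpt)
    _ = (∫ ω, g1 ω / π ω * A ω ∂P) - ∫ ω, g0 ω / (1 - π ω) * (1 - A ω) ∂P :=
        integral_sub hi1 hi0
    _ = (∫ ω, g1 ω ∂P) - ∫ ω, g0 ω ∂P := by rw [key1, key0]

/-- Cross-moment representation of the observed and causal effects (step in the proof of
Proposition 1): `E[g_c·α_c] = θ_c`, `E[g_P·α_P] = θ_P`, the cross moments satisfy
`E[g_P·α_c] = E[g_c·α_P] = θ_P`, and consequently
`θ_c − θ_P = E[(g_c − g_P)(α_c − α_P)]`. -/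
theorem cross_moment_representation
    {Ω : Type*} (𝒢 ℋ : MeasurableSpace Ω) {m0 : MeasurableSpace Ω} (P : Measure Ω) [IsProbabilityMeasure P]
    (h𝒢ℋ : 𝒢 ≤ ℋ) (hℋ : ℋ ≤ m0)
    (A : Ω → ℝ) (hA : Measurable A) (hA01 : ∀ ω, A ω = 0 ∨ A ω = 1)
    (κ : ℝ) (hκ0 : 0 < κ) (hκhalf : κ < 1 / 2)
    (piP pic : Ω → ℝ)
    (hpiPmeas : Measurable[𝒢] piP) (hpicmeas : Measurable[ℋ] pic)
    (hpiPver : piP =ᵐ[P] P[A | 𝒢]) (hpicver : pic =ᵐ[P] P[A | ℋ])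
    (hpiPlb : ∀ ω, κ ≤ piP ω) (hpiPub : ∀ ω, piP ω ≤ 1 - κ)
    (hpiclb : ∀ ω, κ ≤ pic ω) (hpicub : ∀ ω, pic ω ≤ 1 - κ)
    (αP αc : Ω → ℝ)
    (hαP : αP = fun ω => A ω / piP ω - (1 - A ω) / (1 - piP ω))
    (hαc : αc = fun ω => A ω / pic ω - (1 - A ω) / (1 - pic ω))
    (X : Ω → ℝ) (hX : Measurable X) (hXbd : ∃ C, ∀ ω, |X ω| ≤ C)
    (gP0 gP1 gc0 gc1 : Ω → ℝ)
    (hgP0meas : Measurable[𝒢] gP0) (hgP1meas : Measurable[𝒢] gP1)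
    (hgc0meas : Measurable[ℋ] gc0) (hgc1meas : Measurable[ℋ] gc1)
    (hgP0int : Integrable gP0 P) (hgP1int : Integrable gP1 P)
    (hgc0int : Integrable gc0 P) (hgc1int : Integrable gc1 P)
    (gP gc : Ω → ℝ)
    (hgP : gP = fun ω => A ω * gP1 ω + (1 - A ω) * gP0 ω)
    (hgc : gc = fun ω => A ω * gc1 ω + (1 - A ω) * gc0 ω)
    (hgPver : gP =ᵐ[P] P[X | 𝒢 ⊔ MeasurableSpace.comap A inferInstance])
    (hgcver : gc =ᵐ[P] P[X | ℋ ⊔ MeasurableSpace.comap A inferInstance])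
    (θP θc : ℝ)
    (hθP : θP = ∫ ω, (gP1 ω - gP0 ω) ∂P)
    (hθc : θc = ∫ ω, (gc1 ω - gc0 ω) ∂P) :
    (∫ ω, gc ω * αc ω ∂P = θc) ∧
    (∫ ω, gP ω * αP ω ∂P = θP) ∧
    (∫ ω, gP ω * αc ω ∂P = θP) ∧
    (∫ ω, gc ω * αP ω ∂P = θP) ∧
    θc - θP = ∫ ω, (gc ω - gP ω) * (αc ω - αP ω) ∂P := by
  have h𝒢 : 𝒢 ≤ m0 := h𝒢ℋ.trans hℋ
  have hAm0 : Measurable[m0] A := hA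
  -- boundedness of A
  have hAbd : ∀ ω, ‖A ω‖ ≤ 1 := by
    intro ω; rcases hA01 ω with h | h <;> simp [h]
  have h1Abd : ∀ ω, ‖1 - A ω‖ ≤ 1 := by
    intro ω; rcases hA01 ω with h | h <;> simp [h]
  -- bounds on α's
  have key : ∀ x y : ℝ, |x| ≤ 1 → κ ≤ y → |x / y| ≤ 1 / κ := by
    intro x y hx hy
    rw [abs_div, abs_of_pos (lt_of_lt_of_le hκ0 hy)]
    exact div_le_div₀ zero_le_one hx hκ0 hy
  have hαPbd : ∀ ω, ‖αP ω‖ ≤ 2 / κ := by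
    intro ω
    rw [hαP, Real.norm_eq_abs]
    have b1 := key (A ω) (piP ω) (by rcases hA01 ω with h | h <;> simp [h]) (hpiPlb ω)
    have b2 := key (1 - A ω) (1 - piP ω)
      (by rcases hA01 ω with h | h <;> simp [h]) (by have := hpiPub ω; linarith)
    calc |A ω / piP ω - (1 - A ω) / (1 - piP ω)|
        ≤ |A ω / piP ω| + |(1 - A ω) / (1 - piP ω)| := abs_sub _ _
      _ ≤ 1 / κ + 1 / κ := add_le_add b1 b2
      _ = 2 / κ := by ring
  have hαcbd : ∀ ω, ‖αc ω‖ ≤ 2 / κ := by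
    intro ω
    rw [hαc, Real.norm_eq_abs]
    have b1 := key (A ω) (pic ω) (by rcases hA01 ω with h | h <;> simp [h]) (hpiclb ω)
    have b2 := key (1 - A ω) (1 - pic ω)
      (by rcases hA01 ω with h | h <;> simp [h]) (by have := hpicub ω; linarith)
    calc |A ω / pic ω - (1 - A ω) / (1 - pic ω)|
        ≤ |A ω / pic ω| + |(1 - A ω) / (1 - pic ω)| := abs_sub _ _
      _ ≤ 1 / κ + 1 / κ := add_le_add b1 b2
      _ = 2 / κ := by ring
  -- integrability of gP, gc
  have hgPint : Integrable gP P := by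
    rw [hgP]
    have e1 : Integrable (fun ω => A ω * gP1 ω) P :=
      hgP1int.bdd_mul (hAm0.aestronglyMeasurable (μ := P)) (Filter.Eventually.of_forall hAbd)
    have e0 : Integrable (fun ω => (1 - A ω) * gP0 ω) P :=
      hgP0int.bdd_mul
        (((measurable_const.sub hAm0 : Measurable[m0] fun ω => 1 - A ω)).aestronglyMeasurable (μ := P))
        (Filter.Eventually.of_forall h1Abd)
    exact e1.add e0
  have hgcint : Integrable gc P := by
    rw [hgc]
    have e1 : Integrable (fun ω => A ω * gc1 ω) P :=
      hgc1int.bdd_mul (hAm0.aestronglyMeasurable (μ := P)) (Filter.Eventually.of_forall hAbd)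
    have e0 : Integrable (fun ω => (1 - A ω) * gc0 ω) P :=
      hgc0int.bdd_mul
        (((measurable_const.sub hAm0 : Measurable[m0] fun ω => 1 - A ω)).aestronglyMeasurable (μ := P))
        (Filter.Eventually.of_forall h1Abd)
    exact e1.add e0
  -- αP, αc measurability w.r.t. m0
  have hαPmeas0 : Measurable[m0] αP := by
    rw [hαP]
    have hp : Measurable[m0] piP := hpiPmeas.mono h𝒢 le_rfl
    exact (hAm0.div hp).sub ((measurable_const.sub hAm0).div (measurable_const.sub hp))
  have hαcmeas0 : Measurable[m0] αc := by
    rw [hαc]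
    have hp : Measurable[m0] pic := hpicmeas.mono hℋ le_rfl
    exact (hAm0.div hp).sub ((measurable_const.sub hAm0).div (measurable_const.sub hp))
  -- integrability of the four products
  have iPP : Integrable (fun ω => gP ω * αP ω) P :=
    (hgPint.bdd_mul (hαPmeas0.aestronglyMeasurable (μ := P)) (Filter.Eventually.of_forall hαPbd)).congr
      (Filter.Eventually.of_forall fun ω => mul_comm _ _)
  have iPc : Integrable (fun ω => gP ω * αc ω) P :=
    (hgPint.bdd_mul (hαcmeas0.aestronglyMeasurable (μ := P)) (Filter.Eventually.of_forall hαcbd)).congr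
      (Filter.Eventually.of_forall fun ω => mul_comm _ _)
  have icP : Integrable (fun ω => gc ω * αP ω) P :=
    (hgcint.bdd_mul (hαPmeas0.aestronglyMeasurable (μ := P)) (Filter.Eventually.of_forall hαPbd)).congr
      (Filter.Eventually.of_forall fun ω => mul_comm _ _)
  have icc : Integrable (fun ω => gc ω * αc ω) P :=
    (hgcint.bdd_mul (hαcmeas0.aestronglyMeasurable (μ := P)) (Filter.Eventually.of_forall hαcbd)).congr
      (Filter.Eventually.of_forall fun ω => mul_comm _ _)
  -- part 1
  have part1 : ∫ ω, gc ω * αc ω ∂P = θc := by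
    have := rep_lemma P hℋ hAm0 hA01 hκ0 hpicmeas hpicver hpiclb hpicub
      hgc0meas hgc1meas hgc0int hgc1int
    rw [hθc, integral_sub hgc1int hgc0int]
    rw [← this]
    apply integral_congr_ae
    exact Filter.Eventually.of_forall fun ω => by rw [hgc, hαc]
  -- part 2
  have part2 : ∫ ω, gP ω * αP ω ∂P = θP := by
    have := rep_lemma P h𝒢 hAm0 hA01 hκ0 hpiPmeas hpiPver hpiPlb hpiPub
      hgP0meas hgP1meas hgP0int hgP1int
    rw [hθP, integral_sub hgP1int hgP0int]
    rw [← this]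
    apply integral_congr_ae
    exact Filter.Eventually.of_forall fun ω => by rw [hgP, hαP]
  -- part 3
  have part3 : ∫ ω, gP ω * αc ω ∂P = θP := by
    have := rep_lemma P hℋ hAm0 hA01 hκ0 hpicmeas hpicver hpiclb hpicub
      (hgP0meas.mono h𝒢ℋ le_rfl) (hgP1meas.mono h𝒢ℋ le_rfl) hgP0int hgP1int
    rw [hθP, integral_sub hgP1int hgP0int]
    rw [← this]
    apply integral_congr_ae
    exact Filter.Eventually.of_forall fun ω => by rw [hgP, hαc]
  -- part 4 (tower property)
  have part4 : ∫ ω, gc ω * αP ω ∂P = θP := by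
    set m' := 𝒢 ⊔ MeasurableSpace.comap A inferInstance with hm'def
    have hm' : m' ≤ m0 := sup_le h𝒢 hAm0.comap_le
    have hm'2 : m' ≤ ℋ ⊔ MeasurableSpace.comap A inferInstance :=
      sup_le (le_sup_of_le_left h𝒢ℋ) le_sup_right
    have hAc : Measurable[MeasurableSpace.comap A inferInstance] A :=
      Measurable.of_comap_le le_rfl
    have hAm' : Measurable[m'] A := hAc.mono le_sup_right le_rfl
    have hαPm' : Measurable[m'] αP := by
      rw [hαP]
      exact (hAm'.div (hpiPmeas.mono le_sup_left le_rfl)).sub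
        ((measurable_const.sub hAm').div
          (measurable_const.sub (hpiPmeas.mono le_sup_left le_rfl)))
    have hcPint : Integrable (fun ω => αP ω * gc ω) P :=
      hgcint.bdd_mul (hαPmeas0.aestronglyMeasurable (μ := P)) (Filter.Eventually.of_forall hαPbd)
    have htower : P[gc | m'] =ᵐ[P] gP := by
      calc P[gc | m']
          =ᵐ[P] P[P[X | ℋ ⊔ MeasurableSpace.comap A inferInstance] | m'] :=
            condExp_congr_ae hgcver
        _ =ᵐ[P] P[X | m'] := condExp_condExp_of_le hm'2 (sup_le hℋ hAm0.comap_le)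
        _ =ᵐ[P] gP := hgPver.symm
    calc ∫ ω, gc ω * αP ω ∂P
        = ∫ ω, αP ω * gc ω ∂P :=
          integral_congr_ae (Filter.Eventually.of_forall fun ω => mul_comm _ _)
      _ = ∫ ω, αP ω * (P[gc | m']) ω ∂P :=
          int_mul_condexp P hm' hαPm'.stronglyMeasurable hcPint hgcint
      _ = ∫ ω, αP ω * gP ω ∂P := by
          apply integral_congr_ae
          filter_upwards [htower] with ω hω
          rw [hω]
      _ = ∫ ω, gP ω * αP ω ∂P :=
          integral_congr_ae (Filter.Eventually.of_forall fun ω => mul_comm _ _)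
      _ = θP := part2
  refine ⟨part1, part2, part3, part4, ?_⟩
  have expand : ∀ ω, (gc ω - gP ω) * (αc ω - αP ω)
      = gc ω * αc ω - gc ω * αP ω - gP ω * αc ω + gP ω * αP ω := fun ω => by ring
  rw [integral_congr_ae (Filter.Eventually.of_forall expand)]
  have h4 : ∫ ω, (gc ω * αc ω - gc ω * αP ω - gP ω * αc ω + gP ω * αP ω) ∂P
      = (∫ ω, (gc ω * αc ω - gc ω * αP ω - gP ω * αc ω) ∂P) + ∫ ω, gP ω * αP ω ∂P :=
    integral_add ((icc.sub icP).sub iPc) iPP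
  have h5 : ∫ ω, (gc ω * αc ω - gc ω * αP ω - gP ω * αc ω) ∂P
      = (∫ ω, (gc ω * αc ω - gc ω * αP ω) ∂P) - ∫ ω, gP ω * αc ω ∂P :=
    integral_sub (icc.sub icP) iPc
  have h6 : ∫ ω, (gc ω * αc ω - gc ω * αP ω) ∂P
      = (∫ ω, gc ω * αc ω ∂P) - ∫ ω, gc ω * αP ω ∂P :=
    integral_sub icc icP
  rw [h4, h5, h6, part1, part2, part3, part4]
  ring
end

section
/- Nested Riesz representer cross moment and the s_{c,A} identity (step in the proof of Proposition 1): E[α_c·α_P] = E[α_P²]. Consequently E[(α_c − α_P)²] = E[α_c²] − E[α_P²], and, since E[α_P²] > 0, defining s_A := 1 − E[α_P²]/E[α_c²] one has E[(α_c − α_P)²] / E[α_P²] = s_A/(1 − s_A). -/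
open MeasureTheory ProbabilityTheory

private lemma integrable_of_bdd {Ω : Type*} {m0 : MeasurableSpace Ω} {P : Measure Ω}
    [IsFiniteMeasure P] {f : Ω → ℝ} (hf : Measurable[m0] f) {C : ℝ} (h : ∀ ω, |f ω| ≤ C) :
    Integrable f P :=
  (integrable_const C).mono' hf.aestronglyMeasurable (Filter.Eventually.of_forall fun ω => by
    simpa using h ω)

private lemma integral_mul_condexp {Ω : Type*} {m0 : MeasurableSpace Ω} (P : Measure Ω)
    [IsProbabilityMeasure P] {m : MeasurableSpace Ω} (hm : m ≤ m0) {X g π : Ω → ℝ}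
    (hX : Integrable X P) (hπ : π =ᵐ[P] P[X | m]) (hg : Measurable[m] g)
    {C : ℝ} (hbdd : ∀ ω, |g ω| ≤ C) :
    ∫ ω, g ω * X ω ∂P = ∫ ω, g ω * π ω ∂P := by
  have hgae : AEStronglyMeasurable[m0] g P :=
    (hg.mono hm le_rfl : Measurable[m0] g).aestronglyMeasurable
  have hgX : Integrable (g * X) P := hX.bdd_mul (c := C) hgae (Filter.Eventually.of_forall fun x => by simpa using hbdd x)
  have h1 : ∫ ω, g ω * X ω ∂P = ∫ ω, (P[g * X | m]) ω ∂P := (integral_condExp hm).symm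
  have h2 : P[g * X | m] =ᵐ[P] g * P[X | m] :=
    condExp_mul_of_stronglyMeasurable_left (hg.stronglyMeasurable) hgX hX
  rw [h1, integral_congr_ae h2, integral_congr_ae]
  filter_upwards [hπ] with ω hω
  simp [hω]

/-- Key step: if `π` is a version of `E[X|m]` and `g1, g2` are bounded `m`-measurable, then
`∫ (X g1 + (1-X) g2) = ∫ (π g1 + (1-π) g2)`. -/
private lemma integral_key {Ω : Type*} {m0 : MeasurableSpace Ω} (P : Measure Ω)
    [IsProbabilityMeasure P] {m : MeasurableSpace Ω} (hm : m ≤ m0) {X g1 g2 π : Ω → ℝ}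
    (hX : Integrable X P) (hπ : π =ᵐ[P] P[X | m])
    (hg1 : Measurable[m] g1) (hg2 : Measurable[m] g2)
    {C : ℝ} (hbdd1 : ∀ ω, |g1 ω| ≤ C) (hbdd2 : ∀ ω, |g2 ω| ≤ C)
    {D : ℝ} (hXbd : ∀ ω, |X ω| ≤ D) :
    ∫ ω, (X ω * g1 ω + (1 - X ω) * g2 ω) ∂P
      = ∫ ω, (π ω * g1 ω + (1 - π ω) * g2 ω) ∂P := by
  have hg1m : Measurable[m0] g1 := hg1.mono hm le_rfl
  have hg2m : Measurable[m0] g2 := hg2.mono hm le_rfl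
  have hg1int : Integrable g1 P := integrable_of_bdd hg1m hbdd1
  have hg2int : Integrable g2 P := integrable_of_bdd hg2m hbdd2
  have hXg1 : Integrable (fun ω => X ω * g1 ω) P :=
    hg1int.bdd_mul (c := D) hX.aestronglyMeasurable (Filter.Eventually.of_forall fun x => by simpa using hXbd x)
  have hXg2 : Integrable (fun ω => X ω * g2 ω) P :=
    hg2int.bdd_mul (c := D) hX.aestronglyMeasurable (Filter.Eventually.of_forall fun x => by simpa using hXbd x)
  have hπm0 : AEStronglyMeasurable[m0] π P :=
    (stronglyMeasurable_condExp.mono hm).aestronglyMeasurable.congr hπ.symm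
  have hπbd : ∀ᵐ ω ∂P, |π ω| ≤ D := by
    have hDup : P[X | m] ≤ᵐ[P] P[(fun _ => D) | m] :=
      condExp_mono hX (integrable_const D)
        (Filter.Eventually.of_forall fun ω => (abs_le.1 (hXbd ω)).2)
    have hDlo : P[(fun _ => -D) | m] ≤ᵐ[P] P[X | m] :=
      condExp_mono (integrable_const (-D)) hX
        (Filter.Eventually.of_forall fun ω => (abs_le.1 (hXbd ω)).1)
    rw [condExp_const hm] at hDup hDlo
    filter_upwards [hπ, hDup, hDlo] with ω h1 h2 h3
    rw [abs_le, h1]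
    exact ⟨h3, h2⟩
  have hπg1 : Integrable (fun ω => π ω * g1 ω) P := by
    refine (integrable_const (D * C)).mono' (hπm0.mul hg1m.aestronglyMeasurable) ?_
    filter_upwards [hπbd] with ω hω
    simp only [norm_mul, Real.norm_eq_abs]
    exact mul_le_mul (by simpa using hω) (hbdd1 ω) (abs_nonneg _)
      (le_trans (abs_nonneg _) (by simpa using hω))
  have hπg2 : Integrable (fun ω => π ω * g2 ω) P := by
    refine (integrable_const (D * C)).mono' (hπm0.mul hg2m.aestronglyMeasurable) ?_
    filter_upwards [hπbd] with ω hω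
    simp only [norm_mul, Real.norm_eq_abs]
    exact mul_le_mul (by simpa using hω) (hbdd2 ω) (abs_nonneg _)
      (le_trans (abs_nonneg _) (by simpa using hω))
  have e1 : ∫ ω, X ω * g1 ω ∂P = ∫ ω, π ω * g1 ω ∂P := by
    simpa only [mul_comm] using integral_mul_condexp P hm hX hπ hg1 hbdd1
  have e2 : ∫ ω, X ω * g2 ω ∂P = ∫ ω, π ω * g2 ω ∂P := by
    simpa only [mul_comm] using integral_mul_condexp P hm hX hπ hg2 hbdd2
  have split : ∀ (Y : Ω → ℝ), Integrable (fun ω => Y ω * g1 ω) P →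
      Integrable (fun ω => Y ω * g2 ω) P →
      ∫ ω, (Y ω * g1 ω + (1 - Y ω) * g2 ω) ∂P
        = (∫ ω, Y ω * g1 ω ∂P) + ((∫ ω, g2 ω ∂P) - ∫ ω, Y ω * g2 ω ∂P) := by
    intro Y h1 h2
    have hsub : Integrable (fun ω => g2 ω - Y ω * g2 ω) P := hg2int.sub h2
    have e : (fun ω => Y ω * g1 ω + (1 - Y ω) * g2 ω)
        = fun ω => Y ω * g1 ω + (g2 ω - Y ω * g2 ω) := funext fun ω => by ring
    rw [e, integral_add h1 hsub, integral_sub hg2int h2]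
  rw [split X hXg1 hXg2, split π hπg1 hπg2, e1, e2]

private lemma alpha_mul_eq {a p q : ℝ} (ha : a = 0 ∨ a = 1) (hp0 : p ≠ 0)
    (hp1 : (1:ℝ) - p ≠ 0) (hq0 : q ≠ 0) (hq1 : (1:ℝ) - q ≠ 0) :
    (a / p - (1 - a) / (1 - p)) * (a / q - (1 - a) / (1 - q))
      = a * (1 / (p * q)) + (1 - a) * (1 / ((1 - p) * (1 - q))) := by
  rcases ha with h | h <;> subst h <;> field_simp <;> ring

/-- Nested Riesz representer cross moment and the `s_{c,A}` identity (step in the proof of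
Proposition 1): `E[α_c·α_P] = E[α_P²]`, consequently `E[(α_c − α_P)²] = E[α_c²] − E[α_P²]`,
and, since `E[α_P²] > 0`, defining `s_A := 1 − E[α_P²]/E[α_c²]` one has
`E[(α_c − α_P)²] / E[α_P²] = s_A/(1 − s_A)`. -/
theorem nested_riesz_cross_moment
    {Ω : Type*} (𝒢 ℋ : MeasurableSpace Ω) {m0 : MeasurableSpace Ω} (P : Measure Ω) [IsProbabilityMeasure P]
    (h𝒢ℋ : 𝒢 ≤ ℋ) (hℋ : ℋ ≤ m0)
    (A : Ω → ℝ) (hA : Measurable A) (hA01 : ∀ ω, A ω = 0 ∨ A ω = 1)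
    (κ : ℝ) (hκ0 : 0 < κ) (hκhalf : κ < 1 / 2)
    (piP pic : Ω → ℝ)
    (hpiPmeas : Measurable[𝒢] piP) (hpicmeas : Measurable[ℋ] pic)
    (hpiPver : piP =ᵐ[P] P[A | 𝒢]) (hpicver : pic =ᵐ[P] P[A | ℋ])
    (hpiPlb : ∀ ω, κ ≤ piP ω) (hpiPub : ∀ ω, piP ω ≤ 1 - κ)
    (hpiclb : ∀ ω, κ ≤ pic ω) (hpicub : ∀ ω, pic ω ≤ 1 - κ)
    (αP αc : Ω → ℝ)
    (hαP : αP = fun ω => A ω / piP ω - (1 - A ω) / (1 - piP ω))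
    (hαc : αc = fun ω => A ω / pic ω - (1 - A ω) / (1 - pic ω))
    (sA : ℝ)
    (hsA : sA = 1 - (∫ ω, (αP ω) ^ 2 ∂P) / ∫ ω, (αc ω) ^ 2 ∂P) :
    (∫ ω, αc ω * αP ω ∂P = ∫ ω, (αP ω) ^ 2 ∂P) ∧
    (∫ ω, (αc ω - αP ω) ^ 2 ∂P = (∫ ω, (αc ω) ^ 2 ∂P) - ∫ ω, (αP ω) ^ 2 ∂P) ∧
    (0 < ∫ ω, (αP ω) ^ 2 ∂P) ∧
    (∫ ω, (αc ω - αP ω) ^ 2 ∂P) / (∫ ω, (αP ω) ^ 2 ∂P) = sA / (1 - sA) := by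
  have h𝒢 : 𝒢 ≤ m0 := h𝒢ℋ.trans hℋ
  -- pointwise positivity facts
  have hP0 : ∀ ω, 0 < piP ω := fun ω => lt_of_lt_of_le hκ0 (hpiPlb ω)
  have hP1 : ∀ ω, 0 < 1 - piP ω := fun ω => by have := hpiPub ω; linarith
  have hc0 : ∀ ω, 0 < pic ω := fun ω => lt_of_lt_of_le hκ0 (hpiclb ω)
  have hc1 : ∀ ω, 0 < 1 - pic ω := fun ω => by have := hpicub ω; linarith
  have hP1κ : ∀ ω, κ ≤ 1 - piP ω := fun ω => by have := hpiPub ω; linarith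
  have hc1κ : ∀ ω, κ ≤ 1 - pic ω := fun ω => by have := hpicub ω; linarith
  -- A is bounded, integrable
  have hAbd : ∀ ω, |A ω| ≤ 1 := fun ω => by rcases hA01 ω with h | h <;> simp [h]
  have hAm0 : Measurable[m0] A := hA
  have hAint : Integrable A P := integrable_of_bdd hAm0 hAbd
  -- measurability in m0
  have hpiP : Measurable[m0] piP := hpiPmeas.mono h𝒢 le_rfl
  have hpic : Measurable[m0] pic := hpicmeas.mono hℋ le_rfl
  have hαPm : Measurable[m0] αP := by
    rw [hαP]
    exact (hAm0.div hpiP).sub ((measurable_const.sub hAm0).div (measurable_const.sub hpiP))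
  have hαcm : Measurable[m0] αc := by
    rw [hαc]
    exact (hAm0.div hpic).sub ((measurable_const.sub hAm0).div (measurable_const.sub hpic))
  -- bounds on αP, αc
  have hαPbd : ∀ ω, |αP ω| ≤ 1 / κ := by
    intro ω; simp only [hαP]
    rcases hA01 ω with h | h
    · rw [show A ω / piP ω - (1 - A ω) / (1 - piP ω) = -(1 / (1 - piP ω)) by rw [h]; ring,
        abs_neg, abs_of_nonneg (le_of_lt (by have := hP1 ω; positivity))]
      exact one_div_le_one_div_of_le hκ0 (hP1κ ω)
    · rw [show A ω / piP ω - (1 - A ω) / (1 - piP ω) = 1 / piP ω by rw [h]; ring,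
        abs_of_nonneg (le_of_lt (by have := hP0 ω; positivity))]
      exact one_div_le_one_div_of_le hκ0 (hpiPlb ω)
  have hαcbd : ∀ ω, |αc ω| ≤ 1 / κ := by
    intro ω; simp only [hαc]
    rcases hA01 ω with h | h
    · rw [show A ω / pic ω - (1 - A ω) / (1 - pic ω) = -(1 / (1 - pic ω)) by rw [h]; ring,
        abs_neg, abs_of_nonneg (le_of_lt (by have := hc1 ω; positivity))]
      exact one_div_le_one_div_of_le hκ0 (hc1κ ω)
    · rw [show A ω / pic ω - (1 - A ω) / (1 - pic ω) = 1 / pic ω by rw [h]; ring,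
        abs_of_nonneg (le_of_lt (by have := hc0 ω; positivity))]
      exact one_div_le_one_div_of_le hκ0 (hpiclb ω)
  -- integrability of the squares and products
  have hαP2int : Integrable (fun ω => (αP ω) ^ 2) P :=
    integrable_of_bdd (hαPm.pow_const 2) (C := (1/κ)^2) fun ω => by
      rw [abs_pow]
      exact pow_le_pow_left₀ (abs_nonneg _) (hαPbd ω) 2
  have hαc2int : Integrable (fun ω => (αc ω) ^ 2) P :=
    integrable_of_bdd (hαcm.pow_const 2) (C := (1/κ)^2) fun ω => by
      rw [abs_pow]
      exact pow_le_pow_left₀ (abs_nonneg _) (hαcbd ω) 2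
  have hαcαPint : Integrable (fun ω => αc ω * αP ω) P :=
    integrable_of_bdd (hαcm.mul hαPm) (C := (1/κ) * (1/κ)) fun ω => by
      rw [abs_mul]
      exact mul_le_mul (hαcbd ω) (hαPbd ω) (abs_nonneg _) (by positivity)
  -- the common value : ∫ 1/piP + 1/(1 - piP)
  -- cross moment computation via conditioning on ℋ
  have hcross : ∫ ω, αc ω * αP ω ∂P
      = ∫ ω, (1 / piP ω + 1 / (1 - piP ω)) ∂P := by
    have step1 : ∫ ω, αc ω * αP ω ∂P
        = ∫ ω, (A ω * (1 / (pic ω * piP ω))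
            + (1 - A ω) * (1 / ((1 - pic ω) * (1 - piP ω)))) ∂P := by
      apply integral_congr_ae
      apply Filter.Eventually.of_forall
      intro ω
      simp only [hαc, hαP]
      exact alpha_mul_eq (hA01 ω) (ne_of_gt (hc0 ω)) (ne_of_gt (hc1 ω))
        (ne_of_gt (hP0 ω)) (ne_of_gt (hP1 ω))
    have hg1 : Measurable[ℋ] (fun ω => 1 / (pic ω * piP ω)) :=
      Measurable.div measurable_const (hpicmeas.mul (hpiPmeas.mono h𝒢ℋ le_rfl))
    have hg2 : Measurable[ℋ] (fun ω => 1 / ((1 - pic ω) * (1 - piP ω))) :=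
      Measurable.div measurable_const
        ((measurable_const.sub hpicmeas).mul
          (measurable_const.sub (hpiPmeas.mono h𝒢ℋ le_rfl)))
    have hb1 : ∀ ω, |1 / (pic ω * piP ω)| ≤ 1 / (κ * κ) := fun ω => by
      rw [abs_of_nonneg (le_of_lt (by have := hc0 ω; have := hP0 ω; positivity))]
      exact one_div_le_one_div_of_le (by positivity)
        (mul_le_mul (hpiclb ω) (hpiPlb ω) (le_of_lt hκ0) (le_of_lt (hc0 ω)))
    have hb2 : ∀ ω, |1 / ((1 - pic ω) * (1 - piP ω))| ≤ 1 / (κ * κ) := fun ω => by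
      rw [abs_of_nonneg (le_of_lt (by have := hc1 ω; have := hP1 ω; positivity))]
      exact one_div_le_one_div_of_le (by positivity)
        (mul_le_mul (hc1κ ω) (hP1κ ω) (le_of_lt hκ0) (le_of_lt (hc1 ω)))
    have step2 := integral_key P hℋ hAint hpicver hg1 hg2 hb1 hb2 hAbd
    rw [step1, step2]
    apply integral_congr_ae
    apply Filter.Eventually.of_forall
    intro ω
    have h1 := ne_of_gt (hc0 ω); have h2 := ne_of_gt (hc1 ω)
    have h3 := ne_of_gt (hP0 ω); have h4 := ne_of_gt (hP1 ω)
    field_simp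
  -- αP second moment computation via conditioning on 𝒢
  have hsq : ∫ ω, (αP ω) ^ 2 ∂P
      = ∫ ω, (1 / piP ω + 1 / (1 - piP ω)) ∂P := by
    have step1 : ∫ ω, (αP ω) ^ 2 ∂P
        = ∫ ω, (A ω * (1 / (piP ω * piP ω))
            + (1 - A ω) * (1 / ((1 - piP ω) * (1 - piP ω)))) ∂P := by
      apply integral_congr_ae
      apply Filter.Eventually.of_forall
      intro ω
      simp only [hαP]
      rw [sq]
      exact alpha_mul_eq (hA01 ω) (ne_of_gt (hP0 ω)) (ne_of_gt (hP1 ω))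
        (ne_of_gt (hP0 ω)) (ne_of_gt (hP1 ω))
    have hg1 : Measurable[𝒢] (fun ω => 1 / (piP ω * piP ω)) :=
      Measurable.div measurable_const (hpiPmeas.mul hpiPmeas)
    have hg2 : Measurable[𝒢] (fun ω => 1 / ((1 - piP ω) * (1 - piP ω))) :=
      Measurable.div measurable_const
        ((measurable_const.sub hpiPmeas).mul (measurable_const.sub hpiPmeas))
    have hb1 : ∀ ω, |1 / (piP ω * piP ω)| ≤ 1 / (κ * κ) := fun ω => by
      rw [abs_of_nonneg (le_of_lt (by have := hP0 ω; positivity))]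
      exact one_div_le_one_div_of_le (by positivity)
        (mul_le_mul (hpiPlb ω) (hpiPlb ω) (le_of_lt hκ0) (le_of_lt (hP0 ω)))
    have hb2 : ∀ ω, |1 / ((1 - piP ω) * (1 - piP ω))| ≤ 1 / (κ * κ) := fun ω => by
      rw [abs_of_nonneg (le_of_lt (by have := hP1 ω; positivity))]
      exact one_div_le_one_div_of_le (by positivity)
        (mul_le_mul (hP1κ ω) (hP1κ ω) (le_of_lt hκ0) (le_of_lt (hP1 ω)))
    have step2 := integral_key P h𝒢 hAint hpiPver hg1 hg2 hb1 hb2 hAbd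
    rw [step1, step2]
    apply integral_congr_ae
    apply Filter.Eventually.of_forall
    intro ω
    have h3 := ne_of_gt (hP0 ω); have h4 := ne_of_gt (hP1 ω)
    field_simp
  have key : ∫ ω, αc ω * αP ω ∂P = ∫ ω, (αP ω) ^ 2 ∂P := by rw [hcross, hsq]
  -- expansion of the squared difference
  have hexp : ∫ ω, (αc ω - αP ω) ^ 2 ∂P
      = (∫ ω, (αc ω) ^ 2 ∂P) - ∫ ω, (αP ω) ^ 2 ∂P := by
    have e : ∀ ω, (αc ω - αP ω) ^ 2
        = (αc ω) ^ 2 - (αc ω * αP ω * 2 - (αP ω) ^ 2) := fun ω => by ring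
    have i0 : Integrable (fun ω => αc ω * αP ω * 2) P := hαcαPint.mul_const 2
    have i1 : Integrable (fun ω => αc ω * αP ω * 2 - (αP ω) ^ 2) P := i0.sub hαP2int
    rw [integral_congr_ae (Filter.Eventually.of_forall e),
      integral_sub hαc2int i1, integral_sub i0 hαP2int, integral_mul_const, key]
    ring
  -- positivity of the second moments
  have sq_ge : ∀ (p : Ω → ℝ), (∀ ω, 0 < p ω) → (∀ ω, 0 < 1 - p ω) → ∀ ω,
      (1:ℝ) ≤ (A ω / p ω - (1 - A ω) / (1 - p ω)) ^ 2 := by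
    intro p hp0 hp1 ω
    rcases hA01 ω with h | h
    · have e : (A ω / p ω - (1 - A ω) / (1 - p ω)) ^ 2 = (1 / (1 - p ω)) ^ 2 := by
        rw [h]; ring
      rw [e, div_pow, one_pow, le_div_iff₀ (by have := hp1 ω; positivity)]
      nlinarith [hp0 ω, hp1 ω]
    · have e : (A ω / p ω - (1 - A ω) / (1 - p ω)) ^ 2 = (1 / p ω) ^ 2 := by
        rw [h]; ring
      rw [e, div_pow, one_pow, le_div_iff₀ (by have := hp0 ω; positivity)]
      nlinarith [hp0 ω, hp1 ω]
  have hPpos : 0 < ∫ ω, (αP ω) ^ 2 ∂P := by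
    have h1 : (1:ℝ) ≤ ∫ ω, (αP ω) ^ 2 ∂P := by
      have := integral_mono (integrable_const (1:ℝ)) hαP2int
        (fun ω => by simp only [hαP]; exact sq_ge piP hP0 hP1 ω)
      simpa using this
    linarith
  have hcpos : 0 < ∫ ω, (αc ω) ^ 2 ∂P := by
    have h1 : (1:ℝ) ≤ ∫ ω, (αc ω) ^ 2 ∂P := by
      have := integral_mono (integrable_const (1:ℝ)) hαc2int
        (fun ω => by simp only [hαc]; exact sq_ge pic hc0 hc1 ω)
      simpa using this
    linarith
  refine ⟨key, hexp, hPpos, ?_⟩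
  rw [hexp, hsA]
  have ha := ne_of_gt hPpos
  have hc := ne_of_gt hcpos
  field_simp
  rw [sub_sub_cancel, mul_div_cancel_left₀ _ ha]
end

section
/- Proposition 1 (decomposition identity): suppose X = 1_B is the indicator of an event B, ψ := E[g_P(1−g_P)] > 0, E[(g_c − g_P)²] > 0, and E[(α_c − α_P)²] > 0. Define τ := E[α_P²], ρ := E[(g_c − g_P)(α_c − α_P)] / (√E[(g_c − g_P)²] · √E[(α_c − α_P)²]), s_T := E[(g_c − g_P)²]/ψ, and s_A := 1 − E[α_P²]/E[α_c²]. Then (θ_P − θ_c)² = ψ · τ · ρ² · s_T · s_A/(1 − s_A). -/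
open MeasureTheory ProbabilityTheory

section Helpers

variable {Ω : Type*} {m0 : MeasurableSpace Ω} {P : Measure Ω} [IsProbabilityMeasure P]

lemma integrable_of_bound' {f : Ω → ℝ} (hf : AEStronglyMeasurable f P) (C : ℝ)
    (hC : ∀ ω, |f ω| ≤ C) : Integrable f P :=
  Integrable.mono' (integrable_const C) hf (ae_of_all _ fun ω => by simpa using hC ω)

lemma integrable_mul_bounded' {f g : Ω → ℝ} (hf : Integrable f P)
    (hm : AEStronglyMeasurable (fun ω => f ω * g ω) P) {C : ℝ}
    (hgb : ∀ ω, |g ω| ≤ C) : Integrable (fun ω => f ω * g ω) P := by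
  refine Integrable.mono' (hf.abs.mul_const C) hm (ae_of_all _ fun ω => ?_)
  have : ‖f ω * g ω‖ = |f ω| * |g ω| := by rw [Real.norm_eq_abs, abs_mul]
  rw [this]
  exact mul_le_mul_of_nonneg_left (hgb ω) (abs_nonneg _)

lemma key_mul' {m : MeasurableSpace Ω} (hm : m ≤ m0) {f g h : Ω → ℝ}
    (hh : StronglyMeasurable[m] h) (hg : g =ᵐ[P] P[f|m])
    (hf : Integrable f P) (hhf : Integrable (h * f) P) :
    ∫ ω, h ω * f ω ∂P = ∫ ω, h ω * g ω ∂P := by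
  have h2 := condExp_mul_of_stronglyMeasurable_left hh hhf hf
  have e1 : ∫ ω, (h * f) ω ∂P = ∫ ω, (P[h * f|m]) ω ∂P := (integral_condExp hm).symm
  simp only [Pi.mul_apply] at e1
  rw [e1, integral_congr_ae h2]
  exact integral_congr_ae (by filter_upwards [hg] with ω hω; simp only [Pi.mul_apply, hω])

lemma int_A_div' {m : MeasurableSpace Ω} (hm : m ≤ m0) {A π u : Ω → ℝ} {κ : ℝ}
    (hA : Measurable[m0] A) (hA01 : ∀ ω, A ω = 0 ∨ A ω = 1)
    (hπ : Measurable[m] π) (hπver : π =ᵐ[P] P[A|m])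
    (hκ : 0 < κ) (hπlb : ∀ ω, κ ≤ π ω)
    (hu : Measurable[m] u) (hui : Integrable u P) :
    Integrable (fun ω => u ω / π ω * A ω) P ∧
      ∫ ω, u ω / π ω * A ω ∂P = ∫ ω, u ω ∂P := by
  have hA1 : ∀ ω, |A ω| ≤ 1 := by
    intro ω; rcases hA01 ω with h | h <;> rw [h] <;> norm_num
  have hπ0 : ∀ ω, π ω ≠ 0 := fun ω => (lt_of_lt_of_le hκ (hπlb ω)).ne'
  have hmeas : Measurable[m0] (fun ω => u ω / π ω * A ω) :=
    ((hu.le hm).div (hπ.le hm)).mul hA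
  have hbound : ∀ ω, |u ω / π ω * A ω| ≤ κ⁻¹ * |u ω| := by
    intro ω
    rw [abs_mul, abs_div]
    have h1 : κ ≤ |π ω| := le_trans (hπlb ω) (le_abs_self _)
    calc |u ω| / |π ω| * |A ω| ≤ |u ω| / κ * 1 := by
          gcongr
          exact hA1 ω
      _ = κ⁻¹ * |u ω| := by rw [mul_one, div_eq_inv_mul]
  have hint : Integrable (fun ω => u ω / π ω * A ω) P := by
    refine Integrable.mono' (hui.abs.const_mul κ⁻¹) hmeas.aestronglyMeasurable
      (ae_of_all _ fun ω => ?_)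
    rw [Real.norm_eq_abs]
    exact hbound ω
  refine ⟨hint, ?_⟩
  have hAint : Integrable A P := integrable_of_bound' hA.aestronglyMeasurable 1 hA1
  have h1 : ∫ ω, u ω / π ω * A ω ∂P = ∫ ω, u ω / π ω * π ω ∂P :=
    key_mul' hm (hu.div hπ).stronglyMeasurable hπver hAint hint
  rw [h1]
  exact integral_congr_ae (ae_of_all _ fun ω => div_mul_cancel₀ _ (hπ0 ω))

lemma int_oneA_div' {m : MeasurableSpace Ω} (hm : m ≤ m0) {A π u : Ω → ℝ} {κ : ℝ}
    (hA : Measurable[m0] A) (hA01 : ∀ ω, A ω = 0 ∨ A ω = 1)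
    (hπ : Measurable[m] π) (hπver : π =ᵐ[P] P[A|m])
    (hκ : 0 < κ) (hπub : ∀ ω, π ω ≤ 1 - κ)
    (hu : Measurable[m] u) (hui : Integrable u P) :
    Integrable (fun ω => u ω / (1 - π ω) * (1 - A ω)) P ∧
      ∫ ω, u ω / (1 - π ω) * (1 - A ω) ∂P = ∫ ω, u ω ∂P := by
  have hA1 : ∀ ω, |A ω| ≤ 1 := by
    intro ω; rcases hA01 ω with h | h <;> rw [h] <;> norm_num
  have hAint : Integrable A P := integrable_of_bound' hA.aestronglyMeasurable 1 hA1
  have hver : (fun ω => 1 - π ω) =ᵐ[P] P[(fun ω => 1 - A ω)|m] := by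
    have hc : P[(fun _ : Ω => (1:ℝ)) - A|m] =ᵐ[P] P[(fun _ : Ω => (1:ℝ))|m] - P[A|m] :=
      condExp_sub (integrable_const 1) hAint m
    have hcc : P[(fun _ : Ω => (1:ℝ))|m] = fun _ => (1:ℝ) := condExp_const hm 1
    have heq : (fun ω : Ω => 1 - A ω) = (fun _ : Ω => (1:ℝ)) - A := rfl
    rw [heq]
    filter_upwards [hc, hπver] with ω h1 h2
    rw [h1]
    simp only [Pi.sub_apply, hcc, h2]
  have hA01' : ∀ ω, (1 - A ω = 0) ∨ (1 - A ω = 1) := by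
    intro ω; rcases hA01 ω with h | h <;> rw [h] <;> [right; left] <;> norm_num
  have := int_A_div' (P := P) hm (A := fun ω => 1 - A ω) (π := fun ω => 1 - π ω)
    (measurable_const.sub (m:=m0) hA) hA01' (measurable_const.sub hπ) hver hκ
    (fun ω => by show κ ≤ 1 - π ω; linarith [hπub ω]) hu hui
  exact this

end Helpers

/-- Proposition 1 (decomposition identity): for `X = 1_B` the indicator of an event `B`, with
`ψ := E[g_P(1−g_P)] > 0`, `E[(g_c − g_P)²] > 0` and `E[(α_c − α_P)²] > 0`, defining
`τ := E[α_P²]`, `ρ := E[(g_c − g_P)(α_c − α_P)]/(√E[(g_c − g_P)²]·√E[(α_c − α_P)²])`,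
`s_T := E[(g_c − g_P)²]/ψ` and `s_A := 1 − E[α_P²]/E[α_c²]`, one has
`(θ_P − θ_c)² = ψ·τ·ρ²·s_T·s_A/(1 − s_A)`. -/
theorem prop1_decomposition
    {Ω : Type*} (𝒢 ℋ : MeasurableSpace Ω) {m0 : MeasurableSpace Ω} (P : Measure Ω) [IsProbabilityMeasure P]
    (h𝒢ℋ : 𝒢 ≤ ℋ) (hℋ : ℋ ≤ m0)
    (A : Ω → ℝ) (hA : Measurable A) (hA01 : ∀ ω, A ω = 0 ∨ A ω = 1)
    (κ : ℝ) (hκ0 : 0 < κ) (hκhalf : κ < 1 / 2)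
    (piP pic : Ω → ℝ)
    (hpiPmeas : Measurable[𝒢] piP) (hpicmeas : Measurable[ℋ] pic)
    (hpiPver : piP =ᵐ[P] P[A | 𝒢]) (hpicver : pic =ᵐ[P] P[A | ℋ])
    (hpiPlb : ∀ ω, κ ≤ piP ω) (hpiPub : ∀ ω, piP ω ≤ 1 - κ)
    (hpiclb : ∀ ω, κ ≤ pic ω) (hpicub : ∀ ω, pic ω ≤ 1 - κ)
    (αP αc : Ω → ℝ)
    (hαP : αP = fun ω => A ω / piP ω - (1 - A ω) / (1 - piP ω))
    (hαc : αc = fun ω => A ω / pic ω - (1 - A ω) / (1 - pic ω))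
    (B : Set Ω) (hB : MeasurableSet B)
    (X : Ω → ℝ) (hX : X = Set.indicator B fun _ => (1 : ℝ))
    (gP0 gP1 gc0 gc1 : Ω → ℝ)
    (hgP0meas : Measurable[𝒢] gP0) (hgP1meas : Measurable[𝒢] gP1)
    (hgc0meas : Measurable[ℋ] gc0) (hgc1meas : Measurable[ℋ] gc1)
    (hgP0int : Integrable gP0 P) (hgP1int : Integrable gP1 P)
    (hgc0int : Integrable gc0 P) (hgc1int : Integrable gc1 P)
    (gP gc : Ω → ℝ)
    (hgP : gP = fun ω => A ω * gP1 ω + (1 - A ω) * gP0 ω)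
    (hgc : gc = fun ω => A ω * gc1 ω + (1 - A ω) * gc0 ω)
    (hgPver : gP =ᵐ[P] P[X | 𝒢 ⊔ MeasurableSpace.comap A inferInstance])
    (hgcver : gc =ᵐ[P] P[X | ℋ ⊔ MeasurableSpace.comap A inferInstance])
    (θP θc : ℝ)
    (hθP : θP = ∫ ω, (gP1 ω - gP0 ω) ∂P)
    (hθc : θc = ∫ ω, (gc1 ω - gc0 ω) ∂P)
    (ψ τ ρ sT sA : ℝ)
    (hψ : ψ = ∫ ω, gP ω * (1 - gP ω) ∂P) (hψpos : 0 < ψ)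
    (hgdiffpos : 0 < ∫ ω, (gc ω - gP ω) ^ 2 ∂P)
    (hαdiffpos : 0 < ∫ ω, (αc ω - αP ω) ^ 2 ∂P)
    (hτ : τ = ∫ ω, (αP ω) ^ 2 ∂P)
    (hρ : ρ = (∫ ω, (gc ω - gP ω) * (αc ω - αP ω) ∂P) /
      (Real.sqrt (∫ ω, (gc ω - gP ω) ^ 2 ∂P) * Real.sqrt (∫ ω, (αc ω - αP ω) ^ 2 ∂P)))
    (hsT : sT = (∫ ω, (gc ω - gP ω) ^ 2 ∂P) / ψ)
    (hsA : sA = 1 - (∫ ω, (αP ω) ^ 2 ∂P) / ∫ ω, (αc ω) ^ 2 ∂P) :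
    (θP - θc) ^ 2 = ψ * τ * ρ ^ 2 * sT * (sA / (1 - sA)) := by
  have h𝒢 : 𝒢 ≤ m0 := h𝒢ℋ.trans hℋ
  have hA0 : Measurable[m0] A := hA
  have hB0 : MeasurableSet[m0] B := hB
  have hpiPpos : ∀ ω, 0 < piP ω := fun ω => lt_of_lt_of_le hκ0 (hpiPlb ω)
  have hpiP1 : ∀ ω, 0 < 1 - piP ω := fun ω => by linarith [hpiPub ω]
  have hpicpos : ∀ ω, 0 < pic ω := fun ω => lt_of_lt_of_le hκ0 (hpiclb ω)
  have hpic1 : ∀ ω, 0 < 1 - pic ω := fun ω => by linarith [hpicub ω]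
  -- pointwise bounds on αP and αc
  have hαPb : ∀ ω, |αP ω| ≤ κ⁻¹ := by
    intro ω
    rcases hA01 ω with h | h
    · have e : αP ω = -(1 / (1 - piP ω)) := by simp only [hαP]; rw [h]; ring
      rw [e, abs_neg, abs_of_nonneg (one_div_pos.mpr (hpiP1 ω)).le, inv_eq_one_div]
      exact one_div_le_one_div_of_le hκ0 (by linarith [hpiPub ω])
    · have e : αP ω = 1 / piP ω := by simp only [hαP]; rw [h]; ring
      rw [e, abs_of_nonneg (one_div_pos.mpr (hpiPpos ω)).le, inv_eq_one_div]
      exact one_div_le_one_div_of_le hκ0 (hpiPlb ω)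
  have hαcb : ∀ ω, |αc ω| ≤ κ⁻¹ := by
    intro ω
    rcases hA01 ω with h | h
    · have e : αc ω = -(1 / (1 - pic ω)) := by simp only [hαc]; rw [h]; ring
      rw [e, abs_neg, abs_of_nonneg (one_div_pos.mpr (hpic1 ω)).le, inv_eq_one_div]
      exact one_div_le_one_div_of_le hκ0 (by linarith [hpicub ω])
    · have e : αc ω = 1 / pic ω := by simp only [hαc]; rw [h]; ring
      rw [e, abs_of_nonneg (one_div_pos.mpr (hpicpos ω)).le, inv_eq_one_div]
      exact one_div_le_one_div_of_le hκ0 (hpiclb ω)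
  have hαP1sq : ∀ ω, (1:ℝ) ≤ (αP ω) ^ 2 := by
    intro ω
    rcases hA01 ω with h | h
    · have e : αP ω = -(1 / (1 - piP ω)) := by simp only [hαP]; rw [h]; ring
      have h2 : (1:ℝ) ≤ 1 / (1 - piP ω) := by
        rw [le_div_iff₀ (hpiP1 ω)]; nlinarith [hpiPlb ω]
      rw [e]; nlinarith [h2]
    · have e : αP ω = 1 / piP ω := by simp only [hαP]; rw [h]; ring
      have h2 : (1:ℝ) ≤ 1 / piP ω := by
        rw [le_div_iff₀ (hpiPpos ω)]; nlinarith [hpiPub ω, hκ0]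
      rw [e]; nlinarith [h2]
  -- measurability
  have hαPm : Measurable[m0] αP := by
    rw [hαP]
    exact (hA0.div (hpiPmeas.le h𝒢)).sub
      ((hA0.const_sub 1).div ((hpiPmeas.le h𝒢).const_sub 1))
  have hαcm : Measurable[m0] αc := by
    rw [hαc]
    exact (hA0.div (hpicmeas.le hℋ)).sub
      ((hA0.const_sub 1).div ((hpicmeas.le hℋ).const_sub 1))
  have hgPm : Measurable[m0] gP := by
    rw [hgP]
    exact (hA0.mul (hgP1meas.le h𝒢)).add ((hA0.const_sub 1).mul (hgP0meas.le h𝒢))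
  have hgcm : Measurable[m0] gc := by
    rw [hgc]
    exact (hA0.mul (hgc1meas.le hℋ)).add ((hA0.const_sub 1).mul (hgc0meas.le hℋ))
  -- integrability
  have hαPint : Integrable αP P := integrable_of_bound' hαPm.aestronglyMeasurable _ hαPb
  have hαcint : Integrable αc P := integrable_of_bound' hαcm.aestronglyMeasurable _ hαcb
  have hgPb : ∀ ω, |gP ω| ≤ |gP1 ω| + |gP0 ω| := by
    intro ω
    rcases hA01 ω with h | h
    · have e : gP ω = gP0 ω := by simp only [hgP]; rw [h]; ring
      rw [e]; exact le_add_of_nonneg_left (abs_nonneg _)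
    · have e : gP ω = gP1 ω := by simp only [hgP]; rw [h]; ring
      rw [e]; exact le_add_of_nonneg_right (abs_nonneg _)
  have hgcb : ∀ ω, |gc ω| ≤ |gc1 ω| + |gc0 ω| := by
    intro ω
    rcases hA01 ω with h | h
    · have e : gc ω = gc0 ω := by simp only [hgc]; rw [h]; ring
      rw [e]; exact le_add_of_nonneg_left (abs_nonneg _)
    · have e : gc ω = gc1 ω := by simp only [hgc]; rw [h]; ring
      rw [e]; exact le_add_of_nonneg_right (abs_nonneg _)
  have hgPint : Integrable gP P :=
    Integrable.mono' (hgP1int.abs.add hgP0int.abs) hgPm.aestronglyMeasurable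
      (ae_of_all _ fun ω => by rw [Real.norm_eq_abs]; exact hgPb ω)
  have hgcint : Integrable gc P :=
    Integrable.mono' (hgc1int.abs.add hgc0int.abs) hgcm.aestronglyMeasurable
      (ae_of_all _ fun ω => by rw [Real.norm_eq_abs]; exact hgcb ω)
  have IαP2 : Integrable (fun ω => (αP ω) ^ 2) P := by
    have := integrable_mul_bounded' (P := P) hαPint (hαPm.mul hαPm).aestronglyMeasurable hαPb
    simpa [pow_two] using this
  have Iαc2 : Integrable (fun ω => (αc ω) ^ 2) P := by
    have := integrable_mul_bounded' (P := P) hαcint (hαcm.mul hαcm).aestronglyMeasurable hαcb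
    simpa [pow_two] using this
  have IαPαc : Integrable (fun ω => αP ω * αc ω) P :=
    integrable_mul_bounded' hαPint (hαPm.mul hαcm).aestronglyMeasurable hαcb
  have Igcαc : Integrable (fun ω => gc ω * αc ω) P :=
    integrable_mul_bounded' hgcint (hgcm.mul hαcm).aestronglyMeasurable hαcb
  have IgPαc : Integrable (fun ω => gP ω * αc ω) P :=
    integrable_mul_bounded' hgPint (hgPm.mul hαcm).aestronglyMeasurable hαcb
  have IαPgc : Integrable (fun ω => αP ω * gc ω) P := by
    have := integrable_mul_bounded' (P := P) hgcint (hgcm.mul hαPm).aestronglyMeasurable hαPb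
    simpa [mul_comm] using this
  have IαPgP : Integrable (fun ω => αP ω * gP ω) P := by
    have := integrable_mul_bounded' (P := P) hgPint (hgPm.mul hαPm).aestronglyMeasurable hαPb
    simpa [mul_comm] using this
  -- F1 : ∫ αP·gP = θP
  have d1 := int_A_div' (P := P) h𝒢 hA0 hA01 hpiPmeas hpiPver hκ0 hpiPlb hgP1meas hgP1int
  have d0 := int_oneA_div' (P := P) h𝒢 hA0 hA01 hpiPmeas hpiPver hκ0 hpiPub hgP0meas hgP0int
  have F1 : ∫ ω, αP ω * gP ω ∂P = θP := by
    have e : ∀ ω, αP ω * gP ω = gP1 ω / piP ω * A ω - gP0 ω / (1 - piP ω) * (1 - A ω) := by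
      intro ω; simp only [hαP, hgP]; rcases hA01 ω with h | h <;> rw [h] <;> ring
    rw [integral_congr_ae (ae_of_all _ e), integral_sub d1.1 d0.1, d1.2, d0.2, hθP,
      integral_sub hgP1int hgP0int]
  -- F2 : ∫ gc·αc = θc
  have dc1 := int_A_div' (P := P) hℋ hA0 hA01 hpicmeas hpicver hκ0 hpiclb hgc1meas hgc1int
  have dc0 := int_oneA_div' (P := P) hℋ hA0 hA01 hpicmeas hpicver hκ0 hpicub hgc0meas hgc0int
  have F2 : ∫ ω, gc ω * αc ω ∂P = θc := by
    have e : ∀ ω, gc ω * αc ω = gc1 ω / pic ω * A ω - gc0 ω / (1 - pic ω) * (1 - A ω) := by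
      intro ω; simp only [hαc, hgc]; rcases hA01 ω with h | h <;> rw [h] <;> ring
    rw [integral_congr_ae (ae_of_all _ e), integral_sub dc1.1 dc0.1, dc1.2, dc0.2, hθc,
      integral_sub hgc1int hgc0int]
  -- F3 : ∫ gP·αc = θP
  have dP1 := int_A_div' (P := P) hℋ hA0 hA01 hpicmeas hpicver hκ0 hpiclb
    (hgP1meas.le h𝒢ℋ) hgP1int
  have dP0 := int_oneA_div' (P := P) hℋ hA0 hA01 hpicmeas hpicver hκ0 hpicub
    (hgP0meas.le h𝒢ℋ) hgP0int
  have F3 : ∫ ω, gP ω * αc ω ∂P = θP := by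
    have e : ∀ ω, gP ω * αc ω = gP1 ω / pic ω * A ω - gP0 ω / (1 - pic ω) * (1 - A ω) := by
      intro ω; simp only [hαc, hgP]; rcases hA01 ω with h | h <;> rw [h] <;> ring
    rw [integral_congr_ae (ae_of_all _ e), integral_sub dP1.1 dP0.1, dP1.2, dP0.2, hθP,
      integral_sub hgP1int hgP0int]
  -- F5 : ∫ αP·αc = ∫ αP²
  have hu1m : Measurable[𝒢] (fun ω => (piP ω)⁻¹) := hpiPmeas.inv
  have hu2m : Measurable[𝒢] (fun ω => (1 - piP ω)⁻¹) := (hpiPmeas.const_sub 1).inv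
  have hu1int : Integrable (fun ω => (piP ω)⁻¹) P := by
    refine integrable_of_bound' (hu1m.le h𝒢).aestronglyMeasurable κ⁻¹ fun ω => ?_
    rw [abs_of_nonneg (inv_nonneg.mpr (hpiPpos ω).le), inv_eq_one_div, inv_eq_one_div]
    exact one_div_le_one_div_of_le hκ0 (hpiPlb ω)
  have hu2int : Integrable (fun ω => (1 - piP ω)⁻¹) P := by
    refine integrable_of_bound' (hu2m.le h𝒢).aestronglyMeasurable κ⁻¹ fun ω => ?_
    rw [abs_of_nonneg (inv_nonneg.mpr (hpiP1 ω).le), inv_eq_one_div, inv_eq_one_div]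
    exact one_div_le_one_div_of_le hκ0 (by linarith [hpiPub ω])
  have e5 := int_A_div' (P := P) h𝒢 hA0 hA01 hpiPmeas hpiPver hκ0 hpiPlb hu1m hu1int
  have e5' := int_oneA_div' (P := P) h𝒢 hA0 hA01 hpiPmeas hpiPver hκ0 hpiPub hu2m hu2int
  have F5a : ∫ ω, (αP ω) ^ 2 ∂P
      = (∫ ω, (piP ω)⁻¹ ∂P) + ∫ ω, (1 - piP ω)⁻¹ ∂P := by
    have e : ∀ ω, (αP ω) ^ 2
        = (piP ω)⁻¹ / piP ω * A ω + (1 - piP ω)⁻¹ / (1 - piP ω) * (1 - A ω) := by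
      intro ω; simp only [hαP]; rcases hA01 ω with h | h <;> rw [h] <;> ring
    rw [integral_congr_ae (ae_of_all _ e), integral_add e5.1 e5'.1, e5.2, e5'.2]
  have ec1 := int_A_div' (P := P) hℋ hA0 hA01 hpicmeas hpicver hκ0 hpiclb
    (hu1m.le h𝒢ℋ) hu1int
  have ec2 := int_oneA_div' (P := P) hℋ hA0 hA01 hpicmeas hpicver hκ0 hpicub
    (hu2m.le h𝒢ℋ) hu2int
  have F5b : ∫ ω, αP ω * αc ω ∂P
      = (∫ ω, (piP ω)⁻¹ ∂P) + ∫ ω, (1 - piP ω)⁻¹ ∂P := by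
    have e : ∀ ω, αP ω * αc ω
        = (piP ω)⁻¹ / pic ω * A ω + (1 - piP ω)⁻¹ / (1 - pic ω) * (1 - A ω) := by
      intro ω; simp only [hαP, hαc]; rcases hA01 ω with h | h <;> rw [h] <;> ring
    rw [integral_congr_ae (ae_of_all _ e), integral_add ec1.1 ec2.1, ec1.2, ec2.2]
  have F5 : ∫ ω, αP ω * αc ω ∂P = ∫ ω, (αP ω) ^ 2 ∂P := F5b.trans F5a.symm
  -- F4 : ∫ αP·gc = ∫ αP·gP
  have hm1 : 𝒢 ⊔ MeasurableSpace.comap A inferInstance ≤ m0 := sup_le h𝒢 hA.comap_le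
  have hm2 : ℋ ⊔ MeasurableSpace.comap A inferInstance ≤ m0 := sup_le hℋ hA.comap_le
  have hAm : Measurable[MeasurableSpace.comap A inferInstance] A := Measurable.of_comap_le le_rfl
  have hαPm1 : Measurable[𝒢 ⊔ MeasurableSpace.comap A inferInstance] αP := by
    rw [hαP]
    exact ((hAm.le le_sup_right).div (hpiPmeas.le le_sup_left)).sub
      (((hAm.le le_sup_right).const_sub 1).div
        ((hpiPmeas.le le_sup_left).const_sub 1))
  have hαPm2 : Measurable[ℋ ⊔ MeasurableSpace.comap A inferInstance] αP :=
    hαPm1.le (sup_le_sup_right h𝒢ℋ _)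
  have hXb : ∀ ω, |X ω| ≤ 1 := by
    intro ω; rw [hX]; by_cases hω : ω ∈ B <;> simp [hω]
  have hXm0 : Measurable[m0] X := by
    rw [hX]; exact Measurable.indicator (@measurable_const ℝ Ω _ m0 1) hB0
  have hXint : Integrable X P := integrable_of_bound' hXm0.aestronglyMeasurable 1 hXb
  have hαPX : Integrable (αP * X) P :=
    integrable_mul_bounded' hαPint
      (hαPm.aestronglyMeasurable.mul hXint.aestronglyMeasurable) hXb
  have k1 := key_mul' (P := P) hm1 hαPm1.stronglyMeasurable hgPver hXint hαPX
  have k2 := key_mul' (P := P) hm2 hαPm2.stronglyMeasurable hgcver hXint hαPX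
  have F4 : ∫ ω, αP ω * gc ω ∂P = ∫ ω, αP ω * gP ω ∂P := k2.symm.trans k1
  -- expansion of the covariance term
  have expand : ∫ ω, (gc ω - gP ω) * (αc ω - αP ω) ∂P
      = ∫ ω, gc ω * αc ω ∂P - ∫ ω, αP ω * gc ω ∂P
        - (∫ ω, gP ω * αc ω ∂P - ∫ ω, αP ω * gP ω ∂P) := by
    have e : ∀ ω, (gc ω - gP ω) * (αc ω - αP ω)
        = gc ω * αc ω - αP ω * gc ω - (gP ω * αc ω - αP ω * gP ω) := fun ω => by ring
    have I1 : Integrable (fun ω => gc ω * αc ω - αP ω * gc ω) P := Igcαc.sub IαPgc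
    have I2 : Integrable (fun ω => gP ω * αc ω - αP ω * gP ω) P := IgPαc.sub IαPgP
    rw [integral_congr_ae (ae_of_all _ e), integral_sub I1 I2, integral_sub Igcαc IαPgc,
      integral_sub IgPαc IαPgP]
  have C_eq : ∫ ω, (gc ω - gP ω) * (αc ω - αP ω) ∂P = θc - θP := by
    rw [expand, F2, F4, F3, F1]; ring
  -- Da = E[αc²] − E[αP²]
  have Da_eq : ∫ ω, (αc ω - αP ω) ^ 2 ∂P
      = ∫ ω, (αc ω) ^ 2 ∂P - ∫ ω, (αP ω) ^ 2 ∂P := by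
    have e : ∀ ω, (αc ω - αP ω) ^ 2
        = (αc ω) ^ 2 - 2 * (αP ω * αc ω) + (αP ω) ^ 2 := fun ω => by ring
    have I1 : Integrable (fun ω => (αc ω) ^ 2 - 2 * (αP ω * αc ω)) P :=
      Iαc2.sub (IαPαc.const_mul 2)
    rw [integral_congr_ae (ae_of_all _ e), integral_add I1 IαP2,
      integral_sub Iαc2 (IαPαc.const_mul 2), integral_const_mul, F5]
    ring
  -- positivity of τ and E[αc²]
  have hτ1 : (1:ℝ) ≤ ∫ ω, (αP ω) ^ 2 ∂P := by
    have h0 : ∫ _ω, (1:ℝ) ∂P = 1 := by simp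
    rw [← h0]
    exact integral_mono (integrable_const 1) IαP2 fun ω => hαP1sq ω
  have hT : (0:ℝ) < ∫ ω, (αP ω) ^ 2 ∂P := lt_of_lt_of_le one_pos hτ1
  -- final algebra
  have hLHS : (θP - θc) ^ 2 = (∫ ω, (gc ω - gP ω) * (αc ω - αP ω) ∂P) ^ 2 := by
    rw [C_eq]; ring
  rw [hLHS, hρ, hsT, hsA, hτ]
  rw [div_pow, mul_pow, Real.sq_sqrt hgdiffpos.le, Real.sq_sqrt hαdiffpos.le]
  have hE2T : ∫ ω, (αc ω) ^ 2 ∂P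
      = (∫ ω, (αc ω - αP ω) ^ 2 ∂P) + ∫ ω, (αP ω) ^ 2 ∂P := by linarith [Da_eq]
  rw [hE2T]
  have hDaT : (∫ ω, (αc ω - αP ω) ^ 2 ∂P) + (∫ ω, (αP ω) ^ 2 ∂P) ≠ 0 := by
    linarith [hαdiffpos, hT]
  have hTne := hT.ne'
  field_simp
  ring_nf
  rw [mul_inv_cancel_right₀ hTne]
end

section
/- Closed form of the robustness value (Section 4.1): let θ_P, θ₀ ∈ ℝ and ψ, τ > 0, and set λ := (θ_P − θ₀)²/(ψ·τ). Then the infimum over q ∈ [0,1) of the set {q ∈ [0,1) : (θ_P − θ₀)² ≤ (q²/(1−q))·ψ·τ} equals q* := (√(λ² + 4λ) − λ)/2, q* is the unique nonnegative root of q² + λq − λ = 0, q* ∈ [0,1), and q* itself belongs to the set (the infimum is attained). -/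
/-- Closed form of the robustness value (Section 4.1): with `λ := (θ_P − θ₀)²/(ψ·τ)` and
`q* := (√(λ² + 4λ) − λ)/2`, the infimum of `{q ∈ [0,1) : (θ_P − θ₀)² ≤ (q²/(1−q))·ψ·τ}`
equals `q*`, `q*` is the unique nonnegative root of `q² + λq − λ = 0`, `q* ∈ [0,1)`, and `q*`
itself belongs to the set (the infimum is attained). -/
theorem robustness_value_closed_form
    (θP θ₀ ψ τ : ℝ) (hψ : 0 < ψ) (hτ : 0 < τ)
    (lam qstar : ℝ)
    (hlam : lam = (θP - θ₀) ^ 2 / (ψ * τ))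
    (hqstar : qstar = (Real.sqrt (lam ^ 2 + 4 * lam) - lam) / 2) :
    sInf {q : ℝ | q ∈ Set.Ico (0 : ℝ) 1 ∧ (θP - θ₀) ^ 2 ≤ (q ^ 2 / (1 - q)) * ψ * τ} = qstar ∧
    (qstar ^ 2 + lam * qstar - lam = 0 ∧
      ∀ r : ℝ, 0 ≤ r → r ^ 2 + lam * r - lam = 0 → r = qstar) ∧
    qstar ∈ Set.Ico (0 : ℝ) 1 ∧
    qstar ∈ {q : ℝ | q ∈ Set.Ico (0 : ℝ) 1 ∧ (θP - θ₀) ^ 2 ≤ (q ^ 2 / (1 - q)) * ψ * τ} := by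
  have hψτ : 0 < ψ * τ := mul_pos hψ hτ
  have hlam0 : 0 ≤ lam := by
    rw [hlam]; positivity
  set s := Real.sqrt (lam ^ 2 + 4 * lam) with hs
  have hs0 : 0 ≤ s := Real.sqrt_nonneg _
  have hs2 : s ^ 2 = lam ^ 2 + 4 * lam := Real.sq_sqrt (by nlinarith)
  have hsl : lam ≤ s := by nlinarith
  have hq0 : 0 ≤ qstar := by rw [hqstar]; linarith
  have hroot : qstar ^ 2 + lam * qstar - lam = 0 := by rw [hqstar]; nlinarith
  have hq1 : qstar < 1 := by
    by_contra h
    push_neg at h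
    nlinarith
  have hθ : (θP - θ₀) ^ 2 = lam * (ψ * τ) := by
    rw [hlam]; field_simp
  have hfrac : qstar ^ 2 / (1 - qstar) = lam := by
    rw [div_eq_iff (by linarith)]; nlinarith
  have hmem : qstar ∈ {q : ℝ | q ∈ Set.Ico (0 : ℝ) 1 ∧
      (θP - θ₀) ^ 2 ≤ (q ^ 2 / (1 - q)) * ψ * τ} := by
    refine ⟨⟨hq0, hq1⟩, ?_⟩
    rw [hfrac, hθ, mul_assoc]
  have hlb : ∀ q ∈ {q : ℝ | q ∈ Set.Ico (0 : ℝ) 1 ∧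
      (θP - θ₀) ^ 2 ≤ (q ^ 2 / (1 - q)) * ψ * τ}, qstar ≤ q := by
    rintro q ⟨⟨hq0', hq1'⟩, hineq⟩
    have h1q : 0 < 1 - q := by linarith
    have hle : lam ≤ q ^ 2 / (1 - q) := by
      have := hineq
      rw [hθ, mul_assoc] at this
      exact le_of_mul_le_mul_right this hψτ
    have hle' : lam * (1 - q) ≤ q ^ 2 := by
      rw [le_div_iff₀ h1q] at hle; linarith
    nlinarith
  constructor
  · exact le_antisymm (csInf_le ⟨qstar, hlb⟩ hmem) (le_csInf ⟨qstar, hmem⟩ hlb)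
  refine ⟨⟨hroot, ?_⟩, ⟨hq0, hq1⟩, hmem⟩
  intro r hr hr0
  nlinarith [sq_nonneg (r - qstar), sq_nonneg (r + qstar)]
end

section
/- Lemma 2, L² bound: let η ≥ 2 and let p, p̂ : Ω → ℝ be measurable functions with 1/η ≤ p ≤ 1 − 1/η and 1/η ≤ p̂ ≤ 1 − 1/η everywhere. Then E[(D_{p̂} − D_p)²] ≤ 25·η¹²·E[(p̂ − p)²]. -/
open MeasureTheory ProbabilityTheory

set_option maxHeartbeats 1000000 in
lemma lemma2_pointwise (η a b A : ℝ) (hη : 2 ≤ η)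
    (ha1 : 1/η ≤ a) (ha2 : a ≤ 1 - 1/η) (hb1 : 1/η ≤ b) (hb2 : b ≤ 1 - 1/η)
    (hA : A = 0 ∨ A = 1) :
    (2/(a*(1-a)) - (A-a)^2/(a^2*(1-a)^2) - (2/(b*(1-b)) - (A-b)^2/(b^2*(1-b)^2)))^2
      ≤ 25 * η^12 * (a-b)^2 := by
  have hη0 : (0:ℝ) < η := by linarith
  have hinv : (0:ℝ) < 1/η := by positivity
  have ha0 : 0 < a := lt_of_lt_of_le hinv ha1
  have hb0 : 0 < b := lt_of_lt_of_le hinv hb1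
  have ha1' : 0 < 1 - a := lt_of_lt_of_le hinv (by linarith)
  have hb1' : 0 < 1 - b := lt_of_lt_of_le hinv (by linarith)
  have hηa : 1 ≤ η * a := by rw [div_le_iff₀ hη0] at ha1; linarith [ha1]
  have hηb : 1 ≤ η * b := by rw [div_le_iff₀ hη0] at hb1; linarith [hb1]
  have hηa' : 1 ≤ η * (1 - a) := by
    rw [div_le_iff₀ hη0] at ha1
    have : 1/η ≤ 1 - a := by linarith
    rw [div_le_iff₀ hη0] at this; linarith
  have hηb' : 1 ≤ η * (1 - b) := by
    have : 1/η ≤ 1 - b := by linarith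
    rw [div_le_iff₀ hη0] at this; linarith
  have h1 : 1 ≤ (η*a)*(η*b) := by nlinarith
  have h2 : 1 ≤ (η*(1-a))*(η*(1-b)) := by nlinarith
  have h3 : 1 ≤ ((η*a)*(η*b))*((η*(1-a))*(η*(1-b))) := by nlinarith
  have hη4 : 16 ≤ η^4 := by nlinarith [sq_nonneg (η^2 - 4), sq_nonneg (η - 2)]
  have hη8 : (0:ℝ) ≤ η^8 := by positivity
  have h16 : 16*η^8 ≤ 25*η^12 := by
    nlinarith [mul_nonneg hη8 (by linarith : (0:ℝ) ≤ 25*η^4 - 16)]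
  -- bound on the shared term
  have t0sq : (2*(1-a-b)/(a*b*(1-a)*(1-b)))^2 ≤ 4*η^8 := by
    rw [div_pow, div_le_iff₀ (by positivity)]
    have heq : 4*η^8*(a*b*(1-a)*(1-b))^2 = 4*(((η*a)*(η*b))*((η*(1-a))*(η*(1-b))))^2 := by ring
    have h3' : 1 ≤ (((η*a)*(η*b))*((η*(1-a))*(η*(1-b))))^2 := one_le_pow₀ h3
    have h4 : (2*(1-a-b))^2 ≤ 4 := by nlinarith
    rw [heq]; linarith
  rcases hA with rfl | rfl
  · -- A = 0
    have t2sq : ((2-a-b)/((1-a)^2*(1-b)^2))^2 ≤ 4*η^8 := by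
      rw [div_pow, div_le_iff₀ (by positivity)]
      have heq : 4*η^8*((1-a)^2*(1-b)^2)^2 = 4*((η*(1-a))*(η*(1-b)))^4 := by ring
      have h2' : 1 ≤ ((η*(1-a))*(η*(1-b)))^4 := one_le_pow₀ h2
      have h5 : (2-a-b)^2 ≤ 4 := by nlinarith
      rw [heq]; linarith
    have hid : 2/(a*(1-a)) - ((0:ℝ)-a)^2/(a^2*(1-a)^2) - (2/(b*(1-b)) - ((0:ℝ)-b)^2/(b^2*(1-b)^2))
        = (a-b) * (-(2*(1-a-b)/(a*b*(1-a)*(1-b))) - (2-a-b)/((1-a)^2*(1-b)^2)) := by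
      field_simp
      ring
    rw [hid, mul_pow]
    have hE : (-(2*(1-a-b)/(a*b*(1-a)*(1-b))) - (2-a-b)/((1-a)^2*(1-b)^2))^2 ≤ 25*η^12 := by
      nlinarith [t0sq, t2sq, sq_nonneg (2*(1-a-b)/(a*b*(1-a)*(1-b)) - (2-a-b)/((1-a)^2*(1-b)^2)), h16]
    have := mul_le_mul_of_nonneg_left hE (sq_nonneg (a-b))
    linarith
  · -- A = 1
    have t1sq : ((a+b)/(a^2*b^2))^2 ≤ 4*η^8 := by
      rw [div_pow, div_le_iff₀ (by positivity)]
      have heq : 4*η^8*(a^2*b^2)^2 = 4*((η*a)*(η*b))^4 := by ring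
      have h1' : 1 ≤ ((η*a)*(η*b))^4 := one_le_pow₀ h1
      have h5 : (a+b)^2 ≤ 4 := by nlinarith
      rw [heq]; linarith
    have hid : 2/(a*(1-a)) - ((1:ℝ)-a)^2/(a^2*(1-a)^2) - (2/(b*(1-b)) - ((1:ℝ)-b)^2/(b^2*(1-b)^2))
        = (a-b) * ((a+b)/(a^2*b^2) - 2*(1-a-b)/(a*b*(1-a)*(1-b))) := by
      field_simp
      ring
    rw [hid, mul_pow]
    have hE : ((a+b)/(a^2*b^2) - 2*(1-a-b)/(a*b*(1-a)*(1-b)))^2 ≤ 25*η^12 := by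
      nlinarith [t0sq, t1sq, sq_nonneg ((a+b)/(a^2*b^2) + 2*(1-a-b)/(a*b*(1-a)*(1-b))), h16]
    have := mul_le_mul_of_nonneg_left hE (sq_nonneg (a-b))
    linarith

/-- Lemma 2, L² bound: for `η ≥ 2` and measurable `p, p̂ : Ω → ℝ` with
`1/η ≤ p ≤ 1 − 1/η` and `1/η ≤ p̂ ≤ 1 − 1/η` everywhere,
`E[(D_{p̂} − D_p)²] ≤ 25·η¹²·E[(p̂ − p)²]`, where
`D_f := 2/(f(1−f)) − (A − f)²/(f²(1−f)²)`. -/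
theorem lemma2_L2_bound
    {Ω : Type*} {m0 : MeasurableSpace Ω} (P : Measure Ω) [IsProbabilityMeasure P]
    (A : Ω → ℝ) (hA : Measurable A) (hA01 : ∀ ω, A ω = 0 ∨ A ω = 1)
    (η : ℝ) (hη : 2 ≤ η)
    (p phat : Ω → ℝ) (hp : Measurable p) (hphat : Measurable phat)
    (hplb : ∀ ω, 1 / η ≤ p ω) (hpub : ∀ ω, p ω ≤ 1 - 1 / η)
    (hphatlb : ∀ ω, 1 / η ≤ phat ω) (hphatub : ∀ ω, phat ω ≤ 1 - 1 / η)
    (Dp Dphat : Ω → ℝ)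
    (hDp : Dp = fun ω =>
      2 / (p ω * (1 - p ω)) - (A ω - p ω) ^ 2 / ((p ω) ^ 2 * (1 - p ω) ^ 2))
    (hDphat : Dphat = fun ω =>
      2 / (phat ω * (1 - phat ω)) - (A ω - phat ω) ^ 2 / ((phat ω) ^ 2 * (1 - phat ω) ^ 2)) :
    ∫ ω, (Dphat ω - Dp ω) ^ 2 ∂P ≤ 25 * η ^ 12 * ∫ ω, (phat ω - p ω) ^ 2 ∂P := by
  have hη0 : (0:ℝ) < η := by linarith
  have hinv : (0:ℝ) < 1/η := by positivity
  have hpt : ∀ ω, (Dphat ω - Dp ω) ^ 2 ≤ 25 * η ^ 12 * (phat ω - p ω) ^ 2 := by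
    intro ω
    rw [hDp, hDphat]
    exact lemma2_pointwise η (phat ω) (p ω) (A ω) hη (hphatlb ω) (hphatub ω)
      (hplb ω) (hpub ω) (hA01 ω)
  have hmeas : Measurable fun ω => 25 * η ^ 12 * (phat ω - p ω) ^ 2 := by
    exact (measurable_const.mul (((hphat.sub hp).pow measurable_const)))
  have hbdd : ∀ ω, ‖25 * η ^ 12 * (phat ω - p ω) ^ 2‖ ≤ 25 * η ^ 12 := by
    intro ω
    have h1 : 0 < phat ω := lt_of_lt_of_le hinv (hphatlb ω)
    have h2 : phat ω ≤ 1 := by have := hphatub ω; linarith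
    have h3 : 0 < p ω := lt_of_lt_of_le hinv (hplb ω)
    have h4 : p ω ≤ 1 := by have := hpub ω; linarith
    have hsq : (phat ω - p ω) ^ 2 ≤ 1 := by nlinarith
    rw [Real.norm_eq_abs, abs_of_nonneg (by positivity)]
    nlinarith [pow_pos hη0 12]
  have hint : Integrable (fun ω => 25 * η ^ 12 * (phat ω - p ω) ^ 2) P :=
    Integrable.mono' (integrable_const (25 * η ^ 12)) hmeas.aestronglyMeasurable
      (ae_of_all _ hbdd)
  calc ∫ ω, (Dphat ω - Dp ω) ^ 2 ∂P
      ≤ ∫ ω, 25 * η ^ 12 * (phat ω - p ω) ^ 2 ∂P :=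
        integral_mono_of_nonneg (ae_of_all _ fun ω => sq_nonneg _) hint (ae_of_all _ hpt)
    _ = 25 * η ^ 12 * ∫ ω, (phat ω - p ω) ^ 2 ∂P := integral_const_mul _ _
end

section
/- Lemma 2, exact expression for the drift: let η ≥ 2, let 𝒢 ⊆ ℱ be a sub-σ-algebra, let p be a 𝒢-measurable version of E[A | 𝒢] with 1/η ≤ p ≤ 1 − 1/η everywhere, and let p̂ : Ω → ℝ be 𝒢-measurable with 1/η ≤ p̂ ≤ 1 − 1/η everywhere. Then E[D_{p̂} − D_p] = −E[ (p̂ − p)² · ((p̂ + p − 1)² + p(1−p)) / (p̂²(1−p̂)²·p(1−p)) ]. -/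
open MeasureTheory ProbabilityTheory

set_option maxHeartbeats 1000000 in
/-- Lemma 2, exact expression for the drift: for `η ≥ 2`, `p` a `𝒢`-measurable version of
`E[A | 𝒢]` and `p̂` a `𝒢`-measurable function, both with values in `[1/η, 1 − 1/η]`,
`E[D_{p̂} − D_p] = −E[(p̂ − p)²·((p̂ + p − 1)² + p(1−p))/(p̂²(1−p̂)²·p(1−p))]`. -/
theorem lemma2_drift_expression
    {Ω : Type*} (𝒢 : MeasurableSpace Ω) {m0 : MeasurableSpace Ω} (P : Measure Ω) [IsProbabilityMeasure P]
    (h𝒢 : 𝒢 ≤ m0)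
    (A : Ω → ℝ) (hA : Measurable A) (hA01 : ∀ ω, A ω = 0 ∨ A ω = 1)
    (η : ℝ) (hη : 2 ≤ η)
    (p phat : Ω → ℝ) (hp : Measurable[𝒢] p) (hphat : Measurable[𝒢] phat)
    (hpver : p =ᵐ[P] P[A | 𝒢])
    (hplb : ∀ ω, 1 / η ≤ p ω) (hpub : ∀ ω, p ω ≤ 1 - 1 / η)
    (hphatlb : ∀ ω, 1 / η ≤ phat ω) (hphatub : ∀ ω, phat ω ≤ 1 - 1 / η)
    (Dp Dphat : Ω → ℝ)
    (hDp : Dp = fun ω =>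
      2 / (p ω * (1 - p ω)) - (A ω - p ω) ^ 2 / ((p ω) ^ 2 * (1 - p ω) ^ 2))
    (hDphat : Dphat = fun ω =>
      2 / (phat ω * (1 - phat ω)) - (A ω - phat ω) ^ 2 / ((phat ω) ^ 2 * (1 - phat ω) ^ 2)) :
    ∫ ω, (Dphat ω - Dp ω) ∂P =
      - ∫ ω, (phat ω - p ω) ^ 2 * ((phat ω + p ω - 1) ^ 2 + p ω * (1 - p ω)) /
          ((phat ω) ^ 2 * (1 - phat ω) ^ 2 * (p ω * (1 - p ω))) ∂P := by
  have hηpos : (0:ℝ) < η := lt_of_lt_of_le two_pos hη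
  have hcpos : (0:ℝ) < 1 / η := by positivity
  have hp0 : ∀ ω, 0 < p ω := fun ω => lt_of_lt_of_le hcpos (hplb ω)
  have hp1 : ∀ ω, 0 < 1 - p ω := fun ω => lt_of_lt_of_le hcpos (by linarith [hpub ω])
  have hp1' : ∀ ω, 1 / η ≤ 1 - p ω := fun ω => by linarith [hpub ω]
  have hf0 : ∀ ω, 0 < phat ω := fun ω => lt_of_lt_of_le hcpos (hphatlb ω)
  have hf1 : ∀ ω, 0 < 1 - phat ω := fun ω => lt_of_lt_of_le hcpos (by linarith [hphatub ω])
  have hf1' : ∀ ω, 1 / η ≤ 1 - phat ω := fun ω => by linarith [hphatub ω]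
  -- bound lemmas
  have hsq : ∀ x : ℝ, 1 / η ≤ x → 1 / x ^ 2 ≤ η ^ 2 := by
    intro x hx
    have hx0 : 0 < x := lt_of_lt_of_le hcpos hx
    have h1 : 1 ≤ x * η := (div_le_iff₀ hηpos).mp hx
    rw [div_le_iff₀ (by positivity)]
    nlinarith
  have hsq0 : ∀ x : ℝ, 1 / η ≤ x → 0 < 1 / x ^ 2 := by
    intro x hx
    have hx0 : 0 < x := lt_of_lt_of_le hcpos hx
    positivity
  have hprod : ∀ x : ℝ, 1 / η ≤ x → 1 / η ≤ 1 - x → 2 / (x * (1 - x)) ≤ 2 * η ^ 2 := by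
    intro x hx hx'
    have hx0 : 0 < x := lt_of_lt_of_le hcpos hx
    have hx1 : 0 < 1 - x := lt_of_lt_of_le hcpos hx'
    have h1 : 1 ≤ x * η := (div_le_iff₀ hηpos).mp hx
    have h2 : 1 ≤ (1 - x) * η := (div_le_iff₀ hηpos).mp hx'
    rw [div_le_iff₀ (by positivity)]
    nlinarith [mul_le_mul h1 h2 zero_le_one (by positivity : (0:ℝ) ≤ x * η)]
  have hprod0 : ∀ x : ℝ, 1 / η ≤ x → 1 / η ≤ 1 - x → 0 < 2 / (x * (1 - x)) := by
    intro x hx hx'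
    have hx0 : 0 < x := lt_of_lt_of_le hcpos hx
    have hx1 : 0 < 1 - x := lt_of_lt_of_le hcpos hx'
    positivity
  set G : Ω → ℝ := fun ω => 2 / (phat ω * (1 - phat ω)) - 2 / (p ω * (1 - p ω))
      - (1 / (1 - phat ω) ^ 2 - 1 / (1 - p ω) ^ 2) with hGdef
  set H : Ω → ℝ := fun ω => (1 / (1 - phat ω) ^ 2 - 1 / (1 - p ω) ^ 2)
      - (1 / (phat ω) ^ 2 - 1 / (p ω) ^ 2) with hHdef
  -- measurability
  have hHm𝒢 : Measurable[𝒢] H := by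
    rw [hHdef]
    exact ((measurable_const.div ((measurable_const.sub hphat).pow_const 2)).sub
      (measurable_const.div ((measurable_const.sub hp).pow_const 2))).sub
      ((measurable_const.div (hphat.pow_const 2)).sub
        (measurable_const.div (hp.pow_const 2)))
  have hGm𝒢 : Measurable[𝒢] G := by
    rw [hGdef]
    exact ((measurable_const.div (hphat.mul (measurable_const.sub hphat))).sub
      (measurable_const.div (hp.mul (measurable_const.sub hp)))).sub
      ((measurable_const.div ((measurable_const.sub hphat).pow_const 2)).sub
        (measurable_const.div ((measurable_const.sub hp).pow_const 2)))
  have hHm : Measurable[m0] H := hHm𝒢.mono h𝒢 le_rfl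
  have hGm : Measurable[m0] G := hGm𝒢.mono h𝒢 le_rfl
  have hpm : Measurable[m0] p := hp.mono h𝒢 le_rfl
  have hAm : Measurable[m0] A := hA
  -- bounds on H and G
  have hHb : ∀ ω, |H ω| ≤ 4 * η ^ 2 := by
    intro ω
    have b1 := hsq _ (hf1' ω); have b2 := hsq _ (hp1' ω)
    have b3 := hsq _ (hphatlb ω); have b4 := hsq _ (hplb ω)
    have c1 := hsq0 _ (hf1' ω); have c2 := hsq0 _ (hp1' ω)
    have c3 := hsq0 _ (hphatlb ω); have c4 := hsq0 _ (hplb ω)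
    rw [hHdef, abs_le]
    constructor <;> simp only <;> linarith
  have hGb : ∀ ω, |G ω| ≤ 6 * η ^ 2 := by
    intro ω
    have b1 := hprod _ (hphatlb ω) (hf1' ω); have b2 := hprod _ (hplb ω) (hp1' ω)
    have c1 := hprod0 _ (hphatlb ω) (hf1' ω); have c2 := hprod0 _ (hplb ω) (hp1' ω)
    have b3 := hsq _ (hf1' ω); have b4 := hsq _ (hp1' ω)
    have c3 := hsq0 _ (hf1' ω); have c4 := hsq0 _ (hp1' ω)
    rw [hGdef, abs_le]
    constructor <;> simp only <;> linarith
  -- integrability helper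
  have hintb : ∀ (f : Ω → ℝ), Measurable[m0] f → ∀ C : ℝ, (∀ ω, |f ω| ≤ C) → Integrable f P := by
    intro f hf C hb
    exact (integrable_const C).mono' hf.aestronglyMeasurable
      (ae_of_all _ fun ω => by simpa using hb ω)
  have hAb : ∀ ω, |A ω| ≤ 1 := by
    intro ω; rcases hA01 ω with h | h <;> rw [h] <;> norm_num
  have hIntG : Integrable G P := hintb G hGm (6 * η ^ 2) hGb
  have hIntAH : Integrable (fun ω => A ω * H ω) P := by
    refine hintb _ (hAm.mul hHm) (4 * η ^ 2) fun ω => ?_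
    calc |A ω * H ω| = |A ω| * |H ω| := abs_mul _ _
      _ ≤ 1 * (4 * η ^ 2) := by
          refine mul_le_mul (hAb ω) (hHb ω) (abs_nonneg _) zero_le_one
      _ = 4 * η ^ 2 := one_mul _
  have hIntpH : Integrable (fun ω => p ω * H ω) P := by
    refine hintb _ (hpm.mul hHm) (4 * η ^ 2) fun ω => ?_
    calc |p ω * H ω| = |p ω| * |H ω| := abs_mul _ _
      _ ≤ 1 * (4 * η ^ 2) := by
          refine mul_le_mul ?_ (hHb ω) (abs_nonneg _) zero_le_one
          rw [abs_of_pos (hp0 ω)]; linarith [hpub ω, hcpos]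
      _ = 4 * η ^ 2 := one_mul _
  have hIntA : Integrable A P := hintb A hAm 1 hAb
  -- key conditional expectation step
  have hkey : ∫ ω, A ω * H ω ∂P = ∫ ω, p ω * H ω ∂P := by
    have hmul : P[H * A | 𝒢] =ᵐ[P] H * P[A | 𝒢] :=
      condExp_mul_of_stronglyMeasurable_left hHm𝒢.stronglyMeasurable
        (by simpa [mul_comm, Pi.mul_def] using hIntAH) hIntA
    calc ∫ ω, A ω * H ω ∂P = ∫ ω, (H * A) ω ∂P := by
          simp only [Pi.mul_apply, mul_comm]
      _ = ∫ ω, (P[H * A | 𝒢]) ω ∂P := (integral_condExp h𝒢).symm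
      _ = ∫ ω, (H * P[A | 𝒢]) ω ∂P := integral_congr_ae hmul
      _ = ∫ ω, p ω * H ω ∂P := by
          refine integral_congr_ae ?_
          filter_upwards [hpver] with ω hω
          simp only [Pi.mul_apply, hω, mul_comm]
  -- pointwise decomposition
  have hdecomp : ∀ ω, Dphat ω - Dp ω = G ω + A ω * H ω := by
    intro ω
    subst hDp hDphat
    have h1 : p ω ≠ 0 := ne_of_gt (hp0 ω)
    have h2 : (1:ℝ) - p ω ≠ 0 := ne_of_gt (hp1 ω)
    have h3 : phat ω ≠ 0 := ne_of_gt (hf0 ω)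
    have h4 : (1:ℝ) - phat ω ≠ 0 := ne_of_gt (hf1 ω)
    rw [hGdef, hHdef]
    simp only
    rcases hA01 ω with h | h <;> rw [h] <;> field_simp <;> ring
  calc ∫ ω, (Dphat ω - Dp ω) ∂P
      = ∫ ω, (G ω + A ω * H ω) ∂P := integral_congr_ae (ae_of_all _ hdecomp)
    _ = (∫ ω, G ω ∂P) + ∫ ω, A ω * H ω ∂P := integral_add hIntG hIntAH
    _ = (∫ ω, G ω ∂P) + ∫ ω, p ω * H ω ∂P := by rw [hkey]
    _ = ∫ ω, (G ω + p ω * H ω) ∂P := (integral_add hIntG hIntpH).symm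
    _ = ∫ ω, -((phat ω - p ω) ^ 2 * ((phat ω + p ω - 1) ^ 2 + p ω * (1 - p ω)) /
          ((phat ω) ^ 2 * (1 - phat ω) ^ 2 * (p ω * (1 - p ω)))) ∂P := by
        refine integral_congr_ae (ae_of_all _ fun ω => ?_)
        have h1 : p ω ≠ 0 := ne_of_gt (hp0 ω)
        have h2 : (1:ℝ) - p ω ≠ 0 := ne_of_gt (hp1 ω)
        have h3 : phat ω ≠ 0 := ne_of_gt (hf0 ω)
        have h4 : (1:ℝ) - phat ω ≠ 0 := ne_of_gt (hf1 ω)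
        rw [hGdef, hHdef]
        simp only
        field_simp
        ring
    _ = - ∫ ω, (phat ω - p ω) ^ 2 * ((phat ω + p ω - 1) ^ 2 + p ω * (1 - p ω)) /
          ((phat ω) ^ 2 * (1 - phat ω) ^ 2 * (p ω * (1 - p ω))) ∂P := integral_neg _
end

section
/- Mean-zero property of the efficient influence function of τ_P (step in Proposition 3 and Lemma 2): if p is a version of E[A | 𝒢] with κ ≤ p ≤ 1 − κ everywhere for some κ ∈ (0,1/2), then E[D_p] = E[1/(p(1−p))], i.e. the centered influence function D_p − E[1/(p(1−p))] has mean zero. -/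
open MeasureTheory ProbabilityTheory

/-- Mean-zero property of the efficient influence function of `τ_P` (step in Proposition 3 and
Lemma 2): if `p` is a version of `E[A | 𝒢]` with `κ ≤ p ≤ 1 − κ` everywhere for some
`κ ∈ (0,1/2)`, then `E[D_p] = E[1/(p(1−p))]`, i.e. the centered influence function
`D_p − E[1/(p(1−p))]` has mean zero. -/
theorem eif_tau_mean_zero
    {Ω : Type*} (𝒢 : MeasurableSpace Ω) {m0 : MeasurableSpace Ω} (P : Measure Ω) [IsProbabilityMeasure P]
    (h𝒢 : 𝒢 ≤ m0)
    (A : Ω → ℝ) (hA : Measurable A) (hA01 : ∀ ω, A ω = 0 ∨ A ω = 1)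
    (κ : ℝ) (hκ0 : 0 < κ) (hκhalf : κ < 1 / 2)
    (p : Ω → ℝ) (hp : Measurable[𝒢] p) (hpver : p =ᵐ[P] P[A | 𝒢])
    (hplb : ∀ ω, κ ≤ p ω) (hpub : ∀ ω, p ω ≤ 1 - κ)
    (Dp : Ω → ℝ)
    (hDp : Dp = fun ω =>
      2 / (p ω * (1 - p ω)) - (A ω - p ω) ^ 2 / ((p ω) ^ 2 * (1 - p ω) ^ 2)) :
    ∫ ω, Dp ω ∂P = ∫ ω, 1 / (p ω * (1 - p ω)) ∂P := by
  have hpm : Measurable[m0] p := hp.mono h𝒢 le_rfl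
  have hp0 : ∀ ω, 0 < p ω := fun ω => lt_of_lt_of_le hκ0 (hplb ω)
  have hp1 : ∀ ω, p ω < 1 := fun ω => lt_of_le_of_lt (hpub ω) (by linarith)
  have hp1' : ∀ ω, 0 < 1 - p ω := fun ω => by linarith [hp1 ω]
  -- g : inverse squared denominator, G : inverse of p(1-p), h : (1-2p) g
  set g : Ω → ℝ := fun ω => ((p ω) ^ 2 * (1 - p ω) ^ 2)⁻¹ with hgdef
  set G : Ω → ℝ := fun ω => (p ω * (1 - p ω))⁻¹ with hGdef
  set h : Ω → ℝ := fun ω => (1 - 2 * p ω) * g ω with hhdef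
  have hgm𝒢 : Measurable[𝒢] g :=
    ((hp.pow_const 2).mul ((measurable_const.sub hp).pow_const 2)).inv
  have hgm : Measurable[m0] g := hgm𝒢.mono h𝒢 le_rfl
  have hhm𝒢 : Measurable[𝒢] h := (measurable_const.sub (hp.const_mul 2)).mul hgm𝒢
  have hhm : Measurable[m0] h := hhm𝒢.mono h𝒢 le_rfl
  have hGm : Measurable[m0] G := (hpm.mul (measurable_const.sub hpm)).inv
  -- bounds
  have hgb : ∀ ω, |g ω| ≤ (κ ^ 4)⁻¹ := by
    intro ω
    have h1 : κ ^ 2 ≤ (p ω) ^ 2 := pow_le_pow_left₀ hκ0.le (hplb ω) 2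
    have h2 : κ ^ 2 ≤ (1 - p ω) ^ 2 := pow_le_pow_left₀ hκ0.le (by linarith [hpub ω]) 2
    have h3 : κ ^ 4 ≤ (p ω) ^ 2 * (1 - p ω) ^ 2 := by nlinarith [pow_pos hκ0 2]
    rw [abs_of_nonneg (by positivity)]
    exact inv_anti₀ (by positivity) h3
  have hGb : ∀ ω, |G ω| ≤ (κ ^ 2)⁻¹ := by
    intro ω
    have h3 : κ ^ 2 ≤ p ω * (1 - p ω) := by nlinarith [hplb ω, hpub ω]
    rw [abs_of_nonneg (le_of_lt (inv_pos.mpr (mul_pos (hp0 ω) (hp1' ω))))]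
    exact inv_anti₀ (by positivity) h3
  have hhb : ∀ ω, |h ω| ≤ 1 * (κ ^ 4)⁻¹ := by
    intro ω
    have : |(1 : ℝ) - 2 * p ω| ≤ 1 := by
      rw [abs_le]; constructor <;> nlinarith [hplb ω, hpub ω]
    calc |h ω| = |1 - 2 * p ω| * |g ω| := abs_mul _ _
      _ ≤ 1 * (κ ^ 4)⁻¹ := mul_le_mul this (hgb ω) (abs_nonneg _) zero_le_one
  have hAb : ∀ ω, |A ω| ≤ 1 := by
    intro ω; rcases hA01 ω with h' | h' <;> simp [h']
  have int_of_bdd : ∀ (f : Ω → ℝ) (C : ℝ), Measurable[m0] f → (∀ ω, |f ω| ≤ C) →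
      Integrable f P := fun f C hf hb =>
    (integrable_const C).mono' hf.aestronglyMeasurable (Filter.Eventually.of_forall hb)
  have hintA : Integrable A P := int_of_bdd A 1 hA hAb
  have hinthA : Integrable (fun ω => h ω * A ω) P := by
    refine int_of_bdd _ ((κ ^ 4)⁻¹) (hhm.mul hA) (fun ω => ?_)
    calc |h ω * A ω| = |h ω| * |A ω| := abs_mul _ _
      _ ≤ 1 * (κ ^ 4)⁻¹ * 1 :=
        mul_le_mul (hhb ω) (hAb ω) (abs_nonneg _) (by positivity)
      _ = (κ ^ 4)⁻¹ := by ring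
  have hinthp : Integrable (fun ω => h ω * p ω) P := by
    refine int_of_bdd _ ((κ ^ 4)⁻¹) (hhm.mul hpm) (fun ω => ?_)
    have hpb : |p ω| ≤ 1 := by
      rw [abs_of_nonneg (hp0 ω).le]; linarith [hpub ω]
    calc |h ω * p ω| = |h ω| * |p ω| := abs_mul _ _
      _ ≤ 1 * (κ ^ 4)⁻¹ * 1 :=
        mul_le_mul (hhb ω) hpb (abs_nonneg _) (by positivity)
      _ = (κ ^ 4)⁻¹ := by ring
  have hintp2g : Integrable (fun ω => (p ω) ^ 2 * g ω) P := by
    refine int_of_bdd _ ((κ ^ 4)⁻¹) ((hpm.pow_const 2).mul hgm) (fun ω => ?_)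
    have hpb : |(p ω) ^ 2| ≤ 1 := by
      rw [abs_of_nonneg (by positivity)]
      nlinarith [hp0 ω, hp1 ω]
    calc |(p ω) ^ 2 * g ω| = |(p ω) ^ 2| * |g ω| := abs_mul _ _
      _ ≤ 1 * (κ ^ 4)⁻¹ := mul_le_mul hpb (hgb ω) (abs_nonneg _) zero_le_one
      _ = (κ ^ 4)⁻¹ := by ring
  have hintG : Integrable G P := int_of_bdd G ((κ ^ 2)⁻¹) hGm hGb
  -- pull-out property: ∫ h·A = ∫ h·p
  have key : ∫ ω, h ω * A ω ∂P = ∫ ω, h ω * p ω ∂P := by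
    have hpull : P[h * A | 𝒢] =ᵐ[P] h * P[A | 𝒢] :=
      condExp_mul_of_stronglyMeasurable_left hhm𝒢.stronglyMeasurable hinthA hintA
    calc ∫ ω, h ω * A ω ∂P = ∫ ω, (h * A) ω ∂P := rfl
      _ = ∫ ω, (P[h * A | 𝒢]) ω ∂P := (integral_condExp h𝒢).symm
      _ = ∫ ω, h ω * p ω ∂P := by
          refine integral_congr_ae ?_
          filter_upwards [hpull, hpver] with ω h1 h2
          rw [h1, Pi.mul_apply, ← h2]
  -- pointwise rewrite of Dp
  have hDp' : ∀ ω, Dp ω = 2 * G ω - (h ω * A ω + (p ω) ^ 2 * g ω) := by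
    intro ω
    have hpne : p ω ≠ 0 := (hp0 ω).ne'
    have hpne1 : 1 - p ω ≠ 0 := (hp1' ω).ne'
    have hAsq : A ω ^ 2 = A ω := by rcases hA01 ω with h' | h' <;> simp [h']
    rw [hDp]
    simp only [hgdef, hGdef, hhdef]
    field_simp
    nlinarith [hAsq]
  -- pointwise identity h·p + p²·g = G
  have hGid : ∀ ω, h ω * p ω + (p ω) ^ 2 * g ω = G ω := by
    intro ω
    have hpne : p ω ≠ 0 := (hp0 ω).ne'
    have hpne1 : 1 - p ω ≠ 0 := (hp1' ω).ne'
    simp only [hgdef, hGdef, hhdef]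
    field_simp
    ring
  calc ∫ ω, Dp ω ∂P
      = ∫ ω, 2 * G ω - (h ω * A ω + (p ω) ^ 2 * g ω) ∂P := by
        exact integral_congr_ae (Filter.Eventually.of_forall hDp')
    _ = ∫ ω, 2 * G ω ∂P - ∫ ω, (h ω * A ω + (p ω) ^ 2 * g ω) ∂P :=
        integral_sub (hintG.const_mul 2) (hinthA.add hintp2g)
    _ = 2 * ∫ ω, G ω ∂P - ((∫ ω, h ω * A ω ∂P) + ∫ ω, (p ω) ^ 2 * g ω ∂P) := by
        rw [integral_add hinthA hintp2g, integral_const_mul]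
    _ = 2 * ∫ ω, G ω ∂P - ∫ ω, (h ω * p ω + (p ω) ^ 2 * g ω) ∂P := by
        rw [key, ← integral_add hinthp hintp2g]
    _ = 2 * ∫ ω, G ω ∂P - ∫ ω, G ω ∂P := by
        rw [integral_congr_ae (Filter.Eventually.of_forall hGid)]
    _ = ∫ ω, G ω ∂P := by ring
    _ = ∫ ω, 1 / (p ω * (1 - p ω)) ∂P := by simp [hGdef, one_div]
end

section
/- RMST effect bounds (Proposition in the supplement): suppose γ := E[(X − h_P)²] > 0, and define τ := E[α_P²], s_{φ,T} := E[(h_c − h_P)²]/γ, and s_A := 1 − E[α_P²]/E[α_c²]. If v ≥ 0 satisfies s_{φ,T} · s_A/(1 − s_A) ≤ v, then φ_P − √(v·γ·τ) ≤ φ_c ≤ φ_P + √(v·γ·τ). -/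
open MeasureTheory ProbabilityTheory

section Aux

variable {Ω : Type*} {m0 : MeasurableSpace Ω} (P : Measure Ω) [IsProbabilityMeasure P]

/-- Integrability of an a.e.-bounded measurable function on a probability space. -/
lemma aux_int_of_aebdd {f : Ω → ℝ} (hf : AEStronglyMeasurable f P) {c : ℝ}
    (h : ∀ᵐ ω ∂P, |f ω| ≤ c) : Integrable f P :=
  Integrable.mono' (integrable_const c) hf (by simpa [Real.norm_eq_abs] using h)

/-- Pull-out property in integrated form: for `m`-measurable `f`,
`∫ f·g = ∫ f·g'` where `g'` is a version of `E[g|m]`. -/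
lemma aux_pull_condexp {m : MeasurableSpace Ω} (hm : m ≤ m0) {f g g' : Ω → ℝ}
    (hf : StronglyMeasurable[m] f) (hfg : Integrable (fun ω => f ω * g ω) P)
    (hg : Integrable g P) (hg' : g' =ᵐ[P] P[g|m]) :
    ∫ ω, f ω * g ω ∂P = ∫ ω, f ω * g' ω ∂P := by
  have h1 : Integrable (f * g) P := hfg
  calc ∫ ω, f ω * g ω ∂P = ∫ ω, (P[f * g|m]) ω ∂P := (integral_condExp hm).symm
    _ = ∫ ω, f ω * (P[g|m]) ω ∂P := by
        refine integral_congr_ae ?_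
        filter_upwards [condExp_mul_of_stronglyMeasurable_left hf h1 hg] with ω h
        exact h
    _ = ∫ ω, f ω * g' ω ∂P := by
        refine integral_congr_ae ?_
        filter_upwards [hg'] with ω h
        rw [h]

/-- The basic IPW identity. -/
lemma aux_ipw {m : MeasurableSpace Ω} (hm : m ≤ m0) (A : Ω → ℝ) (hA : Measurable[m0] A)
    (hA01 : ∀ ω, A ω = 0 ∨ A ω = 1) {κ : ℝ} (hκ0 : 0 < κ)
    (π : Ω → ℝ) (hπm : Measurable[m] π) (hπlb : ∀ ω, κ ≤ π ω) (hπub : ∀ ω, π ω ≤ 1 - κ)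
    (hπver : π =ᵐ[P] P[A|m]) (k0 k1 : Ω → ℝ) (hk0m : Measurable[m] k0)
    (hk1m : Measurable[m] k1) (hk0i : Integrable k0 P) (hk1i : Integrable k1 P) :
    ∫ ω, (A ω / π ω - (1 - A ω) / (1 - π ω)) * (A ω * k1 ω + (1 - A ω) * k0 ω) ∂P
      = ∫ ω, (k1 ω - k0 ω) ∂P := by
  have hπ0 : ∀ ω, π ω ≠ 0 := fun ω => ne_of_gt (lt_of_lt_of_le hκ0 (hπlb ω))
  have h1πlb : ∀ ω, κ ≤ 1 - π ω := fun ω => by linarith [hπub ω]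
  have h1π0 : ∀ ω, (1 : ℝ) - π ω ≠ 0 := fun ω => ne_of_gt (lt_of_lt_of_le hκ0 (h1πlb ω))
  have hπm0 : Measurable[m0] π := hπm.mono hm le_rfl
  have hAbd : ∀ ω, ‖A ω‖ ≤ 1 := fun ω => by
    rcases hA01 ω with h | h <;> simp [h]
  have hA_int : Integrable A P :=
    aux_int_of_aebdd P hA.aestronglyMeasurable
      (Filter.Eventually.of_forall fun ω => by simpa [Real.norm_eq_abs] using hAbd ω)
  have hinvπbd : ∀ ω, ‖(π ω)⁻¹‖ ≤ κ⁻¹ := fun ω => by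
    rw [Real.norm_eq_abs,
      abs_of_nonneg (le_of_lt (inv_pos.mpr (lt_of_lt_of_le hκ0 (hπlb ω))))]
    exact inv_anti₀ hκ0 (hπlb ω)
  have hinv1πbd : ∀ ω, ‖((1 : ℝ) - π ω)⁻¹‖ ≤ κ⁻¹ := fun ω => by
    rw [Real.norm_eq_abs,
      abs_of_nonneg (le_of_lt (inv_pos.mpr (lt_of_lt_of_le hκ0 (h1πlb ω))))]
    exact inv_anti₀ hκ0 (h1πlb ω)
  have hi1 : Integrable (fun ω => k1 ω / π ω) P := by
    have := Integrable.bdd_mul hk1i hπm0.inv.aestronglyMeasurable (c := κ⁻¹) (Filter.Eventually.of_forall hinvπbd)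
    have heq : (fun ω => (π ω)⁻¹ * k1 ω) = fun ω => k1 ω / π ω := by
      funext ω; rw [div_eq_mul_inv, mul_comm]
    simp only [Pi.inv_apply, Pi.sub_apply] at this
    rwa [heq] at this
  have hi0 : Integrable (fun ω => k0 ω / (1 - π ω)) P := by
    have := Integrable.bdd_mul hk0i (measurable_const.sub hπm0).inv.aestronglyMeasurable
      (c := κ⁻¹) (Filter.Eventually.of_forall hinv1πbd)
    have heq : (fun ω => ((1 : ℝ) - π ω)⁻¹ * k0 ω) = fun ω => k0 ω / (1 - π ω) := by
      funext ω; rw [div_eq_mul_inv, mul_comm]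
    simp only [Pi.inv_apply, Pi.sub_apply] at this
    rwa [heq] at this
  set f : Ω → ℝ := fun ω => k1 ω / π ω + k0 ω / (1 - π ω) with hf_def
  have hf_int : Integrable f P := hi1.add hi0
  have hfm : Measurable[m] f :=
    (hk1m.div hπm).add (hk0m.div (measurable_const.sub hπm))
  have hfA : Integrable (fun ω => f ω * A ω) P := by
    have := Integrable.bdd_mul hf_int hA.aestronglyMeasurable (c := 1) (Filter.Eventually.of_forall hAbd)
    have heq : (fun ω => A ω * f ω) = fun ω => f ω * A ω := by funext ω; ring
    rwa [heq] at this
  have hfπ : Integrable (fun ω => f ω * π ω) P := by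
    have hπbd : ∀ ω, ‖π ω‖ ≤ 1 := fun ω => by
      rw [Real.norm_eq_abs, abs_of_nonneg (le_of_lt (lt_of_lt_of_le hκ0 (hπlb ω)))]
      linarith [hπub ω, hκ0.le]
    have := Integrable.bdd_mul hf_int hπm0.aestronglyMeasurable (c := 1) (Filter.Eventually.of_forall hπbd)
    have heq : (fun ω => π ω * f ω) = fun ω => f ω * π ω := by funext ω; ring
    rwa [heq] at this
  have hpt : ∀ ω, (A ω / π ω - (1 - A ω) / (1 - π ω)) * (A ω * k1 ω + (1 - A ω) * k0 ω)
      = f ω * A ω - k0 ω / (1 - π ω) := by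
    intro ω
    rcases hA01 ω with h | h <;> simp only [hf_def, h] <;> ring
  calc ∫ ω, (A ω / π ω - (1 - A ω) / (1 - π ω)) * (A ω * k1 ω + (1 - A ω) * k0 ω) ∂P
      = ∫ ω, (f ω * A ω - k0 ω / (1 - π ω)) ∂P :=
        integral_congr_ae (Filter.Eventually.of_forall hpt)
    _ = (∫ ω, f ω * A ω ∂P) - ∫ ω, k0 ω / (1 - π ω) ∂P := integral_sub hfA hi0
    _ = (∫ ω, f ω * π ω ∂P) - ∫ ω, k0 ω / (1 - π ω) ∂P := by
        rw [aux_pull_condexp P hm hfm.stronglyMeasurable hfA hA_int hπver]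
    _ = ∫ ω, (f ω * π ω - k0 ω / (1 - π ω)) ∂P := (integral_sub hfπ hi0).symm
    _ = ∫ ω, (k1 ω - k0 ω) ∂P := by
        refine integral_congr_ae (Filter.Eventually.of_forall fun ω => ?_)
        have h1 := hπ0 ω
        have h2 := h1π0 ω
        simp only [hf_def]
        field_simp
        ring

end Aux

set_option maxHeartbeats 1000000 in
/-- RMST effect bounds (Proposition in the supplement): with `γ := E[(X − h_P)²] > 0`,
`τ := E[α_P²]`, `s_{φ,T} := E[(h_c − h_P)²]/γ` and `s_A := 1 − E[α_P²]/E[α_c²]`, if `v ≥ 0`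
satisfies `s_{φ,T}·s_A/(1 − s_A) ≤ v`, then `φ_P − √(v·γ·τ) ≤ φ_c ≤ φ_P + √(v·γ·τ)`. -/
theorem rmst_effect_bounds
    {Ω : Type*} (𝒢 ℋ : MeasurableSpace Ω) {m0 : MeasurableSpace Ω} (P : Measure Ω) [IsProbabilityMeasure P]
    (h𝒢ℋ : 𝒢 ≤ ℋ) (hℋ : ℋ ≤ m0)
    (A : Ω → ℝ) (hA : Measurable A) (hA01 : ∀ ω, A ω = 0 ∨ A ω = 1)
    (κ : ℝ) (hκ0 : 0 < κ) (hκhalf : κ < 1 / 2)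
    (piP pic : Ω → ℝ)
    (hpiPmeas : Measurable[𝒢] piP) (hpicmeas : Measurable[ℋ] pic)
    (hpiPver : piP =ᵐ[P] P[A | 𝒢]) (hpicver : pic =ᵐ[P] P[A | ℋ])
    (hpiPlb : ∀ ω, κ ≤ piP ω) (hpiPub : ∀ ω, piP ω ≤ 1 - κ)
    (hpiclb : ∀ ω, κ ≤ pic ω) (hpicub : ∀ ω, pic ω ≤ 1 - κ)
    (αP αc : Ω → ℝ)
    (hαP : αP = fun ω => A ω / piP ω - (1 - A ω) / (1 - piP ω))
    (hαc : αc = fun ω => A ω / pic ω - (1 - A ω) / (1 - pic ω))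
    (X : Ω → ℝ) (hX : Measurable X) (hXbd : ∃ C, ∀ ω, |X ω| ≤ C)
    (hP0 hP1 hc0 hc1 : Ω → ℝ)
    (hhP0meas : Measurable[𝒢] hP0) (hhP1meas : Measurable[𝒢] hP1)
    (hhc0meas : Measurable[ℋ] hc0) (hhc1meas : Measurable[ℋ] hc1)
    (hhP0int : Integrable hP0 P) (hhP1int : Integrable hP1 P)
    (hhc0int : Integrable hc0 P) (hhc1int : Integrable hc1 P)
    (hP hc : Ω → ℝ)
    (hhP : hP = fun ω => A ω * hP1 ω + (1 - A ω) * hP0 ω)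
    (hhc : hc = fun ω => A ω * hc1 ω + (1 - A ω) * hc0 ω)
    (hhPver : hP =ᵐ[P] P[X | 𝒢 ⊔ MeasurableSpace.comap A inferInstance])
    (hhcver : hc =ᵐ[P] P[X | ℋ ⊔ MeasurableSpace.comap A inferInstance])
    (φP φc : ℝ)
    (hφP : φP = ∫ ω, (hP1 ω - hP0 ω) ∂P)
    (hφc : φc = ∫ ω, (hc1 ω - hc0 ω) ∂P)
    (γ τ sφT sA : ℝ)
    (hγ : γ = ∫ ω, (X ω - hP ω) ^ 2 ∂P) (hγpos : 0 < γ)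
    (hτ : τ = ∫ ω, (αP ω) ^ 2 ∂P)
    (hsφT : sφT = (∫ ω, (hc ω - hP ω) ^ 2 ∂P) / γ)
    (hsA : sA = 1 - (∫ ω, (αP ω) ^ 2 ∂P) / ∫ ω, (αc ω) ^ 2 ∂P)
    (v : ℝ) (hv0 : 0 ≤ v) (hv : sφT * (sA / (1 - sA)) ≤ v) :
    φP - Real.sqrt (v * γ * τ) ≤ φc ∧ φc ≤ φP + Real.sqrt (v * γ * τ) := by
  have h𝒢 : 𝒢 ≤ m0 := h𝒢ℋ.trans hℋ
  have hAm0 : Measurable[m0] A := hA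
  have hXm0 : Measurable[m0] X := hX
  -- basic positivity facts
  have hpiP0 : ∀ ω, (0 : ℝ) < piP ω := fun ω => lt_of_lt_of_le hκ0 (hpiPlb ω)
  have h1piP0 : ∀ ω, (0 : ℝ) < 1 - piP ω := fun ω => by linarith [hpiPub ω]
  have hpic0 : ∀ ω, (0 : ℝ) < pic ω := fun ω => lt_of_lt_of_le hκ0 (hpiclb ω)
  have h1pic0 : ∀ ω, (0 : ℝ) < 1 - pic ω := fun ω => by linarith [hpicub ω]
  -- measurability wrt m0
  have hpiPm0 : Measurable[m0] piP := hpiPmeas.mono h𝒢 le_rfl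
  have hpicm0 : Measurable[m0] pic := hpicmeas.mono hℋ le_rfl
  have hhP0m0 : Measurable[m0] hP0 := hhP0meas.mono h𝒢 le_rfl
  have hhP1m0 : Measurable[m0] hP1 := hhP1meas.mono h𝒢 le_rfl
  have hhc0m0 : Measurable[m0] hc0 := hhc0meas.mono hℋ le_rfl
  have hhc1m0 : Measurable[m0] hc1 := hhc1meas.mono hℋ le_rfl
  have hhPm0 : Measurable[m0] hP := by
    rw [hhP]; exact (hAm0.mul hhP1m0).add ((measurable_const.sub hAm0).mul hhP0m0)
  have hhcm0 : Measurable[m0] hc := by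
    rw [hhc]; exact (hAm0.mul hhc1m0).add ((measurable_const.sub hAm0).mul hhc0m0)
  have hαPm0 : Measurable[m0] αP := by
    rw [hαP]
    exact (hAm0.div hpiPm0).sub ((measurable_const.sub hAm0).div (measurable_const.sub hpiPm0))
  have hαcm0 : Measurable[m0] αc := by
    rw [hαc]
    exact (hAm0.div hpicm0).sub ((measurable_const.sub hAm0).div (measurable_const.sub hpicm0))
  -- boundedness of the weights
  have hαPbd : ∀ ω, |αP ω| ≤ κ⁻¹ := by
    intro ω
    rcases hA01 ω with h | h
    · have he : αP ω = -((1 - piP ω)⁻¹) := by simp only [hαP, h]; ring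
      rw [he, abs_neg, abs_of_nonneg (le_of_lt (inv_pos.mpr (h1piP0 ω)))]
      exact inv_anti₀ hκ0 (by linarith [hpiPub ω])
    · have he : αP ω = (piP ω)⁻¹ := by simp only [hαP, h]; ring
      rw [he, abs_of_nonneg (le_of_lt (inv_pos.mpr (hpiP0 ω)))]
      exact inv_anti₀ hκ0 (hpiPlb ω)
  have hαcbd : ∀ ω, |αc ω| ≤ κ⁻¹ := by
    intro ω
    rcases hA01 ω with h | h
    · have he : αc ω = -((1 - pic ω)⁻¹) := by simp only [hαc, h]; ring
      rw [he, abs_neg, abs_of_nonneg (le_of_lt (inv_pos.mpr (h1pic0 ω)))]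
      exact inv_anti₀ hκ0 (by linarith [hpicub ω])
    · have he : αc ω = (pic ω)⁻¹ := by simp only [hαc, h]; ring
      rw [he, abs_of_nonneg (le_of_lt (inv_pos.mpr (hpic0 ω)))]
      exact inv_anti₀ hκ0 (hpiclb ω)
  have hκinv0 : (0 : ℝ) ≤ κ⁻¹ := le_of_lt (inv_pos.mpr hκ0)
  -- bound for X
  obtain ⟨C0, hC0⟩ := hXbd
  set C : ℝ := max C0 0 with hCdef
  have hC0' : (0 : ℝ) ≤ C := le_max_right _ _
  have hCX : ∀ ω, |X ω| ≤ C := fun ω => le_trans (hC0 ω) (le_max_left _ _)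
  have hX_int : Integrable X P :=
    aux_int_of_aebdd P hXm0.aestronglyMeasurable (Filter.Eventually.of_forall hCX)
  -- a.e. bounds on hP and hc
  have hXbdd' : ∀ᵐ ω ∂P, |X ω| ≤ (C.toNNReal : ℝ) := by
    refine Filter.Eventually.of_forall fun ω => ?_
    rw [Real.coe_toNNReal _ hC0']
    exact hCX ω
  have hhPbd : ∀ᵐ ω ∂P, |hP ω| ≤ C := by
    filter_upwards [hhPver, ae_bdd_condExp_of_ae_bdd hXbdd'] with ω h1 h2
    rw [h1]
    rwa [Real.coe_toNNReal _ hC0'] at h2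
  have hhcbd : ∀ᵐ ω ∂P, |hc ω| ≤ C := by
    filter_upwards [hhcver, ae_bdd_condExp_of_ae_bdd hXbdd'] with ω h1 h2
    rw [h1]
    rwa [Real.coe_toNNReal _ hC0'] at h2
  -- generic integrability of products
  have hgen : ∀ (u w : Ω → ℝ) (cu cw : ℝ), 0 ≤ cu → Measurable[m0] u → Measurable[m0] w →
      (∀ ω, |u ω| ≤ cu) → (∀ᵐ ω ∂P, |w ω| ≤ cw) → Integrable (fun ω => u ω * w ω) P := by
    intro u w cu cw hcu hu hw hub hwb
    refine aux_int_of_aebdd P (hu.mul hw).aestronglyMeasurable (c := cu * cw) ?_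
    filter_upwards [hwb] with ω h
    rw [abs_mul]
    exact mul_le_mul (hub ω) h (abs_nonneg _) hcu
  have II1 : Integrable (fun ω => αc ω * hc ω) P :=
    hgen _ _ _ _ hκinv0 hαcm0 hhcm0 hαcbd hhcbd
  have II2 : Integrable (fun ω => αc ω * hP ω) P :=
    hgen _ _ _ _ hκinv0 hαcm0 hhPm0 hαcbd hhPbd
  have II3 : Integrable (fun ω => αP ω * hc ω) P :=
    hgen _ _ _ _ hκinv0 hαPm0 hhcm0 hαPbd hhcbd
  have II4 : Integrable (fun ω => αP ω * hP ω) P :=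
    hgen _ _ _ _ hκinv0 hαPm0 hhPm0 hαPbd hhPbd
  have Iαc2 : Integrable (fun ω => αc ω ^ 2) P := by
    have := hgen αc αc _ _ hκinv0 hαcm0 hαcm0 hαcbd (Filter.Eventually.of_forall hαcbd)
    simpa [sq] using this
  have IαP2 : Integrable (fun ω => αP ω ^ 2) P := by
    have := hgen αP αP _ _ hκinv0 hαPm0 hαPm0 hαPbd (Filter.Eventually.of_forall hαPbd)
    simpa [sq] using this
  have Iαcp : Integrable (fun ω => αc ω * αP ω) P :=
    hgen αc αP _ _ hκinv0 hαcm0 hαPm0 hαcbd (Filter.Eventually.of_forall hαPbd)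
  -- g := hc - hP and D := αc - αP
  have hgbd : ∀ᵐ ω ∂P, |hc ω - hP ω| ≤ 2 * C := by
    filter_upwards [hhPbd, hhcbd] with ω h1 h2
    calc |hc ω - hP ω| ≤ |hc ω| + |hP ω| := abs_sub _ _
      _ ≤ 2 * C := by linarith
  have hgm0 : Measurable[m0] fun ω => hc ω - hP ω := hhcm0.sub hhPm0
  have hDm0 : Measurable[m0] fun ω => αc ω - αP ω := hαcm0.sub hαPm0
  have hDbd : ∀ ω, |αc ω - αP ω| ≤ κ⁻¹ + κ⁻¹ := fun ω =>
    le_trans (abs_sub _ _) (add_le_add (hαcbd ω) (hαPbd ω))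
  have Ig2 : Integrable (fun ω => (hc ω - hP ω) ^ 2) P := by
    refine aux_int_of_aebdd P ((hgm0.pow measurable_const).aestronglyMeasurable)
      (c := (2 * C) ^ 2) ?_
    filter_upwards [hgbd] with ω h
    rw [abs_of_nonneg (sq_nonneg _), ← sq_abs]
    exact pow_le_pow_left₀ (abs_nonneg _) h 2
  have ID2 : Integrable (fun ω => (αc ω - αP ω) ^ 2) P := by
    refine aux_int_of_aebdd P ((hDm0.pow measurable_const).aestronglyMeasurable)
      (c := (κ⁻¹ + κ⁻¹) ^ 2) (Filter.Eventually.of_forall fun ω => ?_)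
    rw [abs_of_nonneg (sq_nonneg _), ← sq_abs]
    exact pow_le_pow_left₀ (abs_nonneg _) (hDbd ω) 2
  have IDg : Integrable (fun ω => (αc ω - αP ω) * (hc ω - hP ω)) P :=
    hgen _ _ (κ⁻¹ + κ⁻¹) (2 * C) (by linarith) hDm0 hgm0 hDbd hgbd
  -- the four IPW identities
  have hval1 : ∫ ω, αc ω * hc ω ∂P = φc := by
    have e := aux_ipw P hℋ A hAm0 hA01 hκ0 pic hpicmeas hpiclb hpicub hpicver hc0 hc1
      hhc0meas hhc1meas hhc0int hhc1int
    rw [hφc, ← e]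
    exact integral_congr_ae (Filter.Eventually.of_forall fun ω => by simp only [hαc, hhc])
  have hval2 : ∫ ω, αc ω * hP ω ∂P = φP := by
    have e := aux_ipw P hℋ A hAm0 hA01 hκ0 pic hpicmeas hpiclb hpicub hpicver hP0 hP1
      (hhP0meas.mono h𝒢ℋ le_rfl) (hhP1meas.mono h𝒢ℋ le_rfl) hhP0int hhP1int
    rw [hφP, ← e]
    exact integral_congr_ae (Filter.Eventually.of_forall fun ω => by simp only [hαc, hhP])
  have hval4 : ∫ ω, αP ω * hP ω ∂P = φP := by
    have e := aux_ipw P h𝒢 A hAm0 hA01 hκ0 piP hpiPmeas hpiPlb hpiPub hpiPver hP0 hP1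
      hhP0meas hhP1meas hhP0int hhP1int
    rw [hφP, ← e]
    exact integral_congr_ae (Filter.Eventually.of_forall fun ω => by simp only [hαP, hhP])
  -- step (iii): ∫ αP·hc = φP via conditioning on X
  have hAc : Measurable[MeasurableSpace.comap A inferInstance] A :=
    Measurable.of_comap_le le_rfl
  have hm1 : ℋ ⊔ MeasurableSpace.comap A inferInstance ≤ m0 :=
    sup_le hℋ (measurable_iff_comap_le.mp hAm0)
  have hm2 : 𝒢 ⊔ MeasurableSpace.comap A inferInstance ≤ m0 :=
    sup_le h𝒢 (measurable_iff_comap_le.mp hAm0)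
  have hαPm2 : Measurable[𝒢 ⊔ MeasurableSpace.comap A inferInstance] αP := by
    rw [hαP]
    have hA' : Measurable[𝒢 ⊔ MeasurableSpace.comap A inferInstance] A :=
      hAc.mono le_sup_right le_rfl
    have hp' : Measurable[𝒢 ⊔ MeasurableSpace.comap A inferInstance] piP :=
      hpiPmeas.mono le_sup_left le_rfl
    exact (hA'.div hp').sub ((measurable_const.sub hA').div (measurable_const.sub hp'))
  have hαPm1 : Measurable[ℋ ⊔ MeasurableSpace.comap A inferInstance] αP :=
    hαPm2.mono (sup_le_sup_right h𝒢ℋ _) le_rfl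
  have IαPX : Integrable (fun ω => αP ω * X ω) P :=
    hgen αP X _ _ hκinv0 hαPm0 hXm0 hαPbd (Filter.Eventually.of_forall hCX)
  have e3 : ∫ ω, αP ω * X ω ∂P = ∫ ω, αP ω * hc ω ∂P :=
    aux_pull_condexp P hm1 hαPm1.stronglyMeasurable IαPX hX_int hhcver
  have e4 : ∫ ω, αP ω * X ω ∂P = ∫ ω, αP ω * hP ω ∂P :=
    aux_pull_condexp P hm2 hαPm2.stronglyMeasurable IαPX hX_int hhPver
  have hval3 : ∫ ω, αP ω * hc ω ∂P = φP := by rw [← e3, e4, hval4]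
  -- the cross identity ∫ αc·αP = ∫ αP²
  have hk1mH : Measurable[ℋ] fun ω => (piP ω)⁻¹ := (hpiPmeas.mono h𝒢ℋ le_rfl).inv
  have hk0mH : Measurable[ℋ] fun ω => -((1 - piP ω)⁻¹) :=
    ((measurable_const.sub (hpiPmeas.mono h𝒢ℋ le_rfl)).inv).neg
  have hk1mG : Measurable[𝒢] fun ω => (piP ω)⁻¹ := hpiPmeas.inv
  have hk0mG : Measurable[𝒢] fun ω => -((1 - piP ω)⁻¹) :=
    ((measurable_const.sub hpiPmeas).inv).neg
  have hk1i : Integrable (fun ω => (piP ω)⁻¹) P := by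
    refine aux_int_of_aebdd P (hk1mG.mono h𝒢 le_rfl).aestronglyMeasurable (c := κ⁻¹)
      (Filter.Eventually.of_forall fun ω => ?_)
    rw [abs_of_nonneg (le_of_lt (inv_pos.mpr (hpiP0 ω)))]
    exact inv_anti₀ hκ0 (hpiPlb ω)
  have hk0i : Integrable (fun ω => -((1 - piP ω)⁻¹)) P := by
    refine aux_int_of_aebdd P (hk0mG.mono h𝒢 le_rfl).aestronglyMeasurable (c := κ⁻¹)
      (Filter.Eventually.of_forall fun ω => ?_)
    rw [abs_neg, abs_of_nonneg (le_of_lt (inv_pos.mpr (h1piP0 ω)))]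
    exact inv_anti₀ hκ0 (by linarith [hpiPub ω])
  have hcross : ∫ ω, αc ω * αP ω ∂P = ∫ ω, αP ω ^ 2 ∂P := by
    have e1 := aux_ipw P hℋ A hAm0 hA01 hκ0 pic hpicmeas hpiclb hpicub hpicver
      (fun ω => -((1 - piP ω)⁻¹)) (fun ω => (piP ω)⁻¹) hk0mH hk1mH hk0i hk1i
    have e2 := aux_ipw P h𝒢 A hAm0 hA01 hκ0 piP hpiPmeas hpiPlb hpiPub hpiPver
      (fun ω => -((1 - piP ω)⁻¹)) (fun ω => (piP ω)⁻¹) hk0mG hk1mG hk0i hk1i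
    have l1 : ∫ ω, αc ω * αP ω ∂P
        = ∫ ω, ((piP ω)⁻¹ - -((1 - piP ω)⁻¹)) ∂P := by
      rw [← e1]
      exact integral_congr_ae (Filter.Eventually.of_forall fun ω => by
        simp only [hαc, hαP]; ring)
    have l2 : ∫ ω, αP ω ^ 2 ∂P
        = ∫ ω, ((piP ω)⁻¹ - -((1 - piP ω)⁻¹)) ∂P := by
      rw [← e2]
      exact integral_congr_ae (Filter.Eventually.of_forall fun ω => by
        simp only [hαP]; ring)
    rw [l1, l2]
  -- expansion identities
  have hb : ∫ ω, (αc ω - αP ω) * (hc ω - hP ω) ∂P = φc - φP := by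
    calc ∫ ω, (αc ω - αP ω) * (hc ω - hP ω) ∂P
        = ∫ ω, (αc ω * hc ω - αc ω * hP ω - (αP ω * hc ω - αP ω * hP ω)) ∂P :=
          integral_congr_ae (Filter.Eventually.of_forall fun ω => by ring)
      _ = (∫ ω, (αc ω * hc ω - αc ω * hP ω) ∂P)
            - ∫ ω, (αP ω * hc ω - αP ω * hP ω) ∂P := integral_sub (II1.sub II2) (II3.sub II4)
      _ = ((∫ ω, αc ω * hc ω ∂P) - ∫ ω, αc ω * hP ω ∂P)
            - ((∫ ω, αP ω * hc ω ∂P) - ∫ ω, αP ω * hP ω ∂P) := by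
          rw [integral_sub II1 II2, integral_sub II3 II4]
      _ = φc - φP := by rw [hval1, hval2, hval3, hval4]; ring
  have ha : ∫ ω, (αc ω - αP ω) ^ 2 ∂P
      = (∫ ω, αc ω ^ 2 ∂P) - ∫ ω, αP ω ^ 2 ∂P := by
    calc ∫ ω, (αc ω - αP ω) ^ 2 ∂P
        = ∫ ω, (αc ω ^ 2 - (2 * (αc ω * αP ω) - αP ω ^ 2)) ∂P :=
          integral_congr_ae (Filter.Eventually.of_forall fun ω => by ring)
      _ = (∫ ω, αc ω ^ 2 ∂P) - ∫ ω, (2 * (αc ω * αP ω) - αP ω ^ 2) ∂P :=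
          integral_sub Iαc2 ((Iαcp.const_mul 2).sub IαP2)
      _ = (∫ ω, αc ω ^ 2 ∂P) - ((∫ ω, 2 * (αc ω * αP ω) ∂P) - ∫ ω, αP ω ^ 2 ∂P) := by
          rw [integral_sub (Iαcp.const_mul 2) IαP2]
      _ = (∫ ω, αc ω ^ 2 ∂P) - (2 * (∫ ω, αc ω * αP ω ∂P) - ∫ ω, αP ω ^ 2 ∂P) := by
          rw [integral_const_mul]
      _ = (∫ ω, αc ω ^ 2 ∂P) - ∫ ω, αP ω ^ 2 ∂P := by rw [hcross]; ring
  -- Cauchy–Schwarz via the discriminant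
  have hquad : ∀ t : ℝ, 0 ≤ (∫ ω, (αc ω - αP ω) ^ 2 ∂P) * (t * t)
      + (2 * ∫ ω, (αc ω - αP ω) * (hc ω - hP ω) ∂P) * t
      + ∫ ω, (hc ω - hP ω) ^ 2 ∂P := by
    intro t
    have hnn : 0 ≤ ∫ ω, (t * (αc ω - αP ω) + (hc ω - hP ω)) ^ 2 ∂P :=
      integral_nonneg fun ω => sq_nonneg _
    have hexp : ∫ ω, (t * (αc ω - αP ω) + (hc ω - hP ω)) ^ 2 ∂P
        = (t * t) * (∫ ω, (αc ω - αP ω) ^ 2 ∂P)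
          + (2 * t) * (∫ ω, (αc ω - αP ω) * (hc ω - hP ω) ∂P)
          + ∫ ω, (hc ω - hP ω) ^ 2 ∂P := by
      calc ∫ ω, (t * (αc ω - αP ω) + (hc ω - hP ω)) ^ 2 ∂P
          = ∫ ω, ((t * t) * ((αc ω - αP ω) ^ 2)
              + ((2 * t) * ((αc ω - αP ω) * (hc ω - hP ω)) + (hc ω - hP ω) ^ 2)) ∂P :=
            integral_congr_ae (Filter.Eventually.of_forall fun ω => by ring)
        _ = (∫ ω, (t * t) * ((αc ω - αP ω) ^ 2) ∂P)
              + ∫ ω, ((2 * t) * ((αc ω - αP ω) * (hc ω - hP ω)) + (hc ω - hP ω) ^ 2) ∂P :=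
            integral_add (ID2.const_mul (t * t)) ((IDg.const_mul (2 * t)).add Ig2)
        _ = (∫ ω, (t * t) * ((αc ω - αP ω) ^ 2) ∂P)
              + ((∫ ω, (2 * t) * ((αc ω - αP ω) * (hc ω - hP ω)) ∂P)
                + ∫ ω, (hc ω - hP ω) ^ 2 ∂P) := by
            rw [integral_add (IDg.const_mul (2 * t)) Ig2]
        _ = _ := by rw [integral_const_mul, integral_const_mul]; ring
    rw [hexp] at hnn
    nlinarith [hnn]
  have hdisc := discrim_le_zero hquad
  rw [discrim] at hdisc
  have hCS : (∫ ω, (αc ω - αP ω) * (hc ω - hP ω) ∂P) ^ 2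
      ≤ (∫ ω, (αc ω - αP ω) ^ 2 ∂P) * ∫ ω, (hc ω - hP ω) ^ 2 ∂P := by linarith [hdisc]
  -- pointwise lower bounds for the weights
  have hαPsq : ∀ ω, (1 : ℝ) ≤ αP ω ^ 2 := by
    intro ω
    rcases hA01 ω with h | h
    · have he : αP ω = -((1 - piP ω)⁻¹) := by simp only [hαP, h]; ring
      have hp := h1piP0 ω
      have hp1 : 1 - piP ω < 1 := by linarith [hpiP0 ω]
      have key : αP ω ^ 2 * (1 - piP ω) ^ 2 = 1 := by
        have hne : (1 : ℝ) - piP ω ≠ 0 := ne_of_gt hp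
        rw [he]; field_simp
      nlinarith [key, sq_nonneg (αP ω), hp, hp1]
    · have he : αP ω = (piP ω)⁻¹ := by simp only [hαP, h]; ring
      have hp := hpiP0 ω
      have hp1 : piP ω < 1 := by linarith [h1piP0 ω]
      have key : αP ω ^ 2 * piP ω ^ 2 = 1 := by
        have hne : piP ω ≠ 0 := ne_of_gt hp
        rw [he]; field_simp
      nlinarith [key, sq_nonneg (αP ω), hp, hp1]
  have hαcsq : ∀ ω, (1 : ℝ) ≤ αc ω ^ 2 := by
    intro ω
    rcases hA01 ω with h | h
    · have he : αc ω = -((1 - pic ω)⁻¹) := by simp only [hαc, h]; ring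
      have hp := h1pic0 ω
      have hp1 : 1 - pic ω < 1 := by linarith [hpic0 ω]
      have key : αc ω ^ 2 * (1 - pic ω) ^ 2 = 1 := by
        have hne : (1 : ℝ) - pic ω ≠ 0 := ne_of_gt hp
        rw [he]; field_simp
      nlinarith [key, sq_nonneg (αc ω), hp, hp1]
    · have he : αc ω = (pic ω)⁻¹ := by simp only [hαc, h]; ring
      have hp := hpic0 ω
      have hp1 : pic ω < 1 := by linarith [h1pic0 ω]
      have key : αc ω ^ 2 * pic ω ^ 2 = 1 := by
        have hne : pic ω ≠ 0 := ne_of_gt hp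
        rw [he]; field_simp
      nlinarith [key, sq_nonneg (αc ω), hp, hp1]
  have hIP1 : (1 : ℝ) ≤ ∫ ω, αP ω ^ 2 ∂P := by
    have := integral_mono (integrable_const (1 : ℝ)) IαP2 hαPsq
    simpa using this
  have hIc1 : (1 : ℝ) ≤ ∫ ω, αc ω ^ 2 ∂P := by
    have := integral_mono (integrable_const (1 : ℝ)) Iαc2 hαcsq
    simpa using this
  have hG0 : (0 : ℝ) ≤ ∫ ω, (hc ω - hP ω) ^ 2 ∂P := integral_nonneg fun ω => sq_nonneg _
  -- final arithmetic
  set IP : ℝ := ∫ ω, αP ω ^ 2 ∂P with hIPdef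
  set Ic : ℝ := ∫ ω, αc ω ^ 2 ∂P with hIcdef
  set G : ℝ := ∫ ω, (hc ω - hP ω) ^ 2 ∂P with hGdef
  have hIP0 : (0 : ℝ) < IP := by linarith
  have hIc0 : (0 : ℝ) < Ic := by linarith
  have hfrac : sA / (1 - sA) = (Ic - IP) / IP := by
    rw [hsA]
    field_simp
    rw [sub_sub_cancel, mul_div_cancel_left₀ _ hIP0.ne']
  have hkey : (Ic - IP) * G ≤ v * γ * τ := by
    have h1 : sφT * (sA / (1 - sA)) * (γ * IP) ≤ v * (γ * IP) :=
      mul_le_mul_of_nonneg_right hv (by positivity)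
    have h2 : sφT * (sA / (1 - sA)) * (γ * IP) = (Ic - IP) * G := by
      rw [hsφT, hfrac]
      field_simp
    rw [hτ]
    calc (Ic - IP) * G = sφT * (sA / (1 - sA)) * (γ * IP) := h2.symm
      _ ≤ v * (γ * IP) := h1
      _ = v * γ * IP := by ring
  have hb2 : (φc - φP) ^ 2 ≤ (Ic - IP) * G := by
    rw [← hb, ← ha]
    exact hCS
  have hfinal : (φc - φP) ^ 2 ≤ v * γ * τ := le_trans hb2 hkey
  have habs : |φc - φP| ≤ Real.sqrt (v * γ * τ) := by
    rw [← Real.sqrt_sq_eq_abs]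
    exact Real.sqrt_le_sqrt hfinal
  have h := abs_le.mp habs
  exact ⟨by linarith [h.1], by linarith [h.2]⟩
end
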